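/- arXiv:1807.02825 — 6 statements merged into one kernel-verified Lean document; each statement's English description precedes it below -/
import Mathlib

section
/- Let B = [b_{ij}] be an n×n real matrix with b_{ij} ≤ 0 for all i ≠ j. Then B is a non-singular M-matrix if and only if there exist vectors η = (η_1,…,η_n) and q = (q_1,…,q_n) with η_i > 0 and q_i > 0 for all i, such that Σ_{j=1}^n (η_i b_{ij} q_j + η_j b_{ji} q_i) > 0 for every i = 1,…,n. -/
open MeasureTheory Filter Topology

noncomputable section

/-- A P-matrix: all principal minors are positive. -/
def IsPMatrix {m : ℕ} (B : Matrix (Fin m) (Fin m) ℝ) : Prop :=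
  ∀ S : Finset (Fin m), S.Nonempty →
    0 < (B.submatrix (fun i : {y // y ∈ S} => (i : Fin m))
          (fun j : {y // y ∈ S} => (j : Fin m))).det

/-- A non-singular M-matrix: nonpositive off-diagonal entries and all principal
minors positive. -/
def IsNonsingularMMatrix {m : ℕ} (B : Matrix (Fin m) (Fin m) ℝ) : Prop :=
  (∀ i j, i ≠ j → B i j ≤ 0) ∧ IsPMatrix B

/-!
(⇒) A Z-matrix with positive principal minors is semipositive: eliminating the pivot
`B 0 0 > 0` leaves a Schur complement that is again a Z-matrix with positive principal minors,
whose positive vector `u` with positive image (by induction) extends to one for `B`. With such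
vectors `q` for `B` and `η` for `Bᵀ`, the `i`-th sum is `η i * (B q) i + (Bᵀ η) i * q i > 0`.

(⇐) For `A = diag η * B * diag q` the hypothesis says that `A + Aᵀ` has positive row sums, and
as `A` is a Z-matrix this passes to every principal submatrix. Then
`2 yᵀ A y = ∑ᵢ (row + column sum)ᵢ yᵢ² - ∑ᵢⱼ Aᵢⱼ (yᵢ - yⱼ)² > 0` for `y ≠ 0`, so the
determinant stays nonzero along the segment from `1` to `A` and is positive. The principal
minors of `B` differ from those of `A` by positive factors.
-/

namespace Matrix

variable {ι κ : Type*}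

theorem det_ne_zero_of_dotProduct_mulVec_pos [Fintype ι] [DecidableEq ι] {A : Matrix ι ι ℝ}
    (hA : ∀ y ≠ 0, 0 < y ⬝ᵥ (A *ᵥ y)) : A.det ≠ 0 := by
  intro h
  obtain ⟨y, hy, hAy⟩ := exists_mulVec_eq_zero_iff.2 h
  simpa [hAy] using hA y hy

theorem det_pos_of_dotProduct_mulVec_pos [Fintype ι] [DecidableEq ι] {A : Matrix ι ι ℝ}
    (hA : ∀ y ≠ 0, 0 < y ⬝ᵥ (A *ᵥ y)) : 0 < A.det := by
  set f : ℝ → ℝ := fun t => ((1 - t) • (1 : Matrix ι ι ℝ) + t • A).det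
  have hf : ContinuousOn f (Set.Icc 0 1) := by
    apply Continuous.continuousOn
    apply Continuous.matrix_det
    fun_prop
  have hf_ne : ∀ t ∈ Set.Icc (0 : ℝ) 1, f t ≠ 0 := by
    rintro t ⟨ht0, ht1⟩
    refine det_ne_zero_of_dotProduct_mulVec_pos fun y hy => ?_
    have hyy : 0 < y ⬝ᵥ y := lt_of_le_of_ne (by simpa using dotProduct_self_star_nonneg y)
      (Ne.symm (dotProduct_self_eq_zero.not.2 hy))
    have hAy := hA y hy
    simp only [add_mulVec, smul_mulVec, one_mulVec, dotProduct_add, dotProduct_smul, smul_eq_mul]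
    rcases ht1.lt_or_eq with ht1 | rfl
    · nlinarith [mul_pos (sub_pos.2 ht1) hyy, mul_nonneg ht0 hAy.le]
    · simpa using hAy
  by_contra! hdet
  obtain ⟨t, ht, hft⟩ := intermediate_value_Icc' zero_le_one hf
    ⟨by simpa [f] using hdet, by simp [f]⟩
  exact hf_ne t ht hft

theorem two_mul_dotProduct_mulVec [Fintype ι] (A : Matrix ι ι ℝ) (y : ι → ℝ) :
    2 * (y ⬝ᵥ (A *ᵥ y)) =
      ∑ i, (∑ j, (A i j + A j i)) * y i ^ 2 - ∑ i, ∑ j, A i j * (y i - y j) ^ 2 := by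
  have hswap : ∑ i, ∑ j, A j i * y i ^ 2 = ∑ i, ∑ j, A i j * y j ^ 2 :=
    Finset.sum_comm
  calc 2 * (y ⬝ᵥ (A *ᵥ y))
      = ∑ i, ∑ j, (A i j * y i ^ 2 + A i j * y j ^ 2 - A i j * (y i - y j) ^ 2) := by
        simp only [dotProduct, mulVec, Finset.mul_sum]
        exact Finset.sum_congr rfl fun i _ => Finset.sum_congr rfl fun j _ => by ring
    _ = _ := by
        simp only [Finset.sum_sub_distrib, Finset.sum_add_distrib, Finset.sum_mul, add_mul, hswap]

def IsZMatrix (A : Matrix ι ι ℝ) : Prop :=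
  ∀ i j, i ≠ j → A i j ≤ 0

theorem IsZMatrix.dotProduct_mulVec_pos [Fintype ι] {A : Matrix ι ι ℝ} (hA : A.IsZMatrix)
    (hsum : ∀ i, 0 < ∑ j, (A i j + A j i)) {y : ι → ℝ} (hy : y ≠ 0) :
    0 < y ⬝ᵥ (A *ᵥ y) := by
  have hdiff : ∑ i, ∑ j, A i j * (y i - y j) ^ 2 ≤ 0 := by
    refine Finset.sum_nonpos fun i _ => Finset.sum_nonpos fun j _ => ?_
    rcases eq_or_ne i j with rfl | hij
    · simp
    · exact mul_nonpos_of_nonpos_of_nonneg (hA i j hij) (sq_nonneg _)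
  have hdiag : 0 < ∑ i, (∑ j, (A i j + A j i)) * y i ^ 2 := by
    obtain ⟨i, hi⟩ := Function.ne_iff.1 hy
    exact Finset.sum_pos' (fun j _ => mul_nonneg (hsum j).le (sq_nonneg _))
      ⟨i, Finset.mem_univ i, mul_pos (hsum i) (sq_pos_of_ne_zero hi)⟩
  linarith [two_mul_dotProduct_mulVec A y]

theorem IsZMatrix.submatrix {A : Matrix ι ι ℝ} (hA : A.IsZMatrix) {e : κ → ι}
    (he : Function.Injective e) : (A.submatrix e e).IsZMatrix :=
  fun _ _ hkl => hA _ _ (he.ne hkl)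

theorem IsZMatrix.sum_submatrix_add_pos [Fintype ι] [Fintype κ] {A : Matrix ι ι ℝ}
    (hA : A.IsZMatrix) (hsum : ∀ i, 0 < ∑ j, (A i j + A j i)) {e : κ → ι}
    (he : Function.Injective e) (k : κ) :
    0 < ∑ l, (A (e k) (e l) + A (e l) (e k)) := by
  set f : ι → ℝ := fun j => A (e k) j + A j (e k)
  have hout : ∀ j ∉ Finset.univ.map ⟨e, he⟩, f j ≤ 0 := fun j hj =>
    have hjk : j ≠ e k := fun h => hj (h ▸ Finset.mem_map_of_mem _ (Finset.mem_univ k))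
    add_nonpos (hA _ _ hjk.symm) (hA _ _ hjk)
  calc 0 < ∑ j, f j := hsum (e k)
    _ ≤ ∑ j ∈ Finset.univ.map ⟨e, he⟩, f j :=
      Finset.sum_le_sum_of_subset_of_nonpos' (Finset.subset_univ _) fun j _ hj => hout j hj
    _ = ∑ l, f (e l) := Finset.sum_map _ _ _

def schurComplZero {n : ℕ} (B : Matrix (Fin (n + 1)) (Fin (n + 1)) ℝ) :
    Matrix (Fin n) (Fin n) ℝ :=
  of fun i j => B i.succ j.succ - B i.succ 0 * B 0 j.succ / B 0 0

theorem IsZMatrix.schurComplZero {n : ℕ} {B : Matrix (Fin (n + 1)) (Fin (n + 1)) ℝ}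
    (hB : B.IsZMatrix) (hβ : 0 < B 0 0) : (schurComplZero B).IsZMatrix := by
  intro i j hij
  have hprod : 0 ≤ B i.succ 0 * B 0 j.succ :=
    mul_nonneg_of_nonpos_of_nonpos (hB _ _ (Fin.succ_ne_zero i)) (hB _ _ (Fin.succ_ne_zero j).symm)
  have hB_ij := hB _ _ (Fin.succ_injective _ |>.ne hij)
  simp only [Matrix.schurComplZero, of_apply]
  linarith [div_nonneg hprod hβ.le]

theorem det_submatrix_sumElim_eq_mul_det_schurComplZero {n : ℕ} [Fintype κ] [DecidableEq κ]
    (B : Matrix (Fin (n + 1)) (Fin (n + 1)) ℝ) (hβ : B 0 0 ≠ 0) (e : κ → Fin n) :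
    (B.submatrix (Sum.elim (fun _ : Unit => 0) (Fin.succ ∘ e))
      (Sum.elim (fun _ : Unit => 0) (Fin.succ ∘ e))).det =
      B 0 0 * ((schurComplZero B).submatrix e e).det := by
  let P : Matrix Unit Unit ℝ := of fun _ _ => B 0 0
  let : Invertible P :=
    ⟨of fun _ _ => (B 0 0)⁻¹, by ext; simp [P, mul_apply, hβ], by ext; simp [P, mul_apply, hβ]⟩
  have hblocks : B.submatrix (Sum.elim (fun _ : Unit => 0) (Fin.succ ∘ e))
      (Sum.elim (fun _ : Unit => 0) (Fin.succ ∘ e)) =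
      fromBlocks P (of fun _ l => B 0 (e l).succ) (of fun k _ => B (e k).succ 0)
        (B.submatrix (Fin.succ ∘ e) (Fin.succ ∘ e)) := by
    ext (_ | _) (_ | _) <;> rfl
  rw [hblocks, det_fromBlocks₁₁]
  congr 2
  · simp [P]
  · ext k l
    simp only [schurComplZero, sub_apply, submatrix_apply, Function.comp_apply, mul_apply,
      Finset.univ_unique, Finset.sum_singleton, of_apply]
    change _ - _ * (B 0 0)⁻¹ * _ = _
    ring

theorem exists_pos_mulVec_pos_of_schurComplZero {n : ℕ}
    {B : Matrix (Fin (n + 1)) (Fin (n + 1)) ℝ} (hβ : 0 < B 0 0) (hrow : ∀ j : Fin n, B 0 j.succ ≤ 0)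
    {u : Fin n → ℝ} (hu : ∀ i, 0 < u i) (hSu : ∀ i, 0 < (schurComplZero B *ᵥ u) i) :
    ∃ q : Fin (n + 1) → ℝ, (∀ i, 0 < q i) ∧ ∀ i, 0 < (B *ᵥ q) i := by
  obtain ⟨s, hs, hSs⟩ : ∃ s > 0, ∀ i, 0 < (schurComplZero B *ᵥ u) i + B i.succ 0 * s := by
    have hsmall : ∀ᶠ s in 𝓝 (0 : ℝ), ∀ i, 0 < (schurComplZero B *ᵥ u) i + B i.succ 0 * s := by
      refine Filter.eventually_all.2 fun i => ?_
      have hlim : Tendsto (fun s => (schurComplZero B *ᵥ u) i + B i.succ 0 * s) (𝓝 0)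
          (𝓝 ((schurComplZero B *ᵥ u) i + B i.succ 0 * 0)) :=
        tendsto_const_nhds.add (tendsto_const_nhds.mul tendsto_id)
      rw [mul_zero, add_zero] at hlim
      exact hlim.eventually (lt_mem_nhds (hSu i))
    exact ((eventually_mem_nhdsWithin (s := Set.Ioi 0)).and
      (eventually_nhdsWithin_of_eventually_nhds hsmall)).exists
  set c := ∑ j, B 0 j.succ * u j
  have hc : c / B 0 0 ≤ 0 :=
    div_nonpos_of_nonpos_of_nonneg (Finset.sum_nonpos fun j _ =>
      mul_nonpos_of_nonpos_of_nonneg (hrow j) (hu j).le) hβ.le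
  refine ⟨Fin.cons (s - c / B 0 0) u, Fin.cases ?_ hu, Fin.cases ?_ fun i => ?_⟩
  · simp only [Fin.cons_zero]
    linarith
  · have hq0 : (B *ᵥ Fin.cons (s - c / B 0 0) u) 0 = B 0 0 * s := by
      simp only [mulVec, dotProduct, Fin.sum_univ_succ, Fin.cons_zero, Fin.cons_succ]
      field_simp
      ring
    rw [hq0]
    positivity
  · have hqsucc : (B *ᵥ Fin.cons (s - c / B 0 0) u) i.succ =
        (schurComplZero B *ᵥ u) i + B i.succ 0 * s := by
      simp only [mulVec, dotProduct, Fin.sum_univ_succ, Fin.cons_zero, Fin.cons_succ,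
        schurComplZero, of_apply, sub_mul, Finset.sum_sub_distrib, c]
      have hc_mul : ∑ j, B i.succ 0 * B 0 j.succ / B 0 0 * u j = B i.succ 0 * c / B 0 0 := by
        rw [Finset.mul_sum, Finset.sum_div]
        exact Finset.sum_congr rfl fun j _ => by ring
      rw [hc_mul]
      ring
    rw [hqsucc]
    exact hSs i

end Matrix

open Matrix

theorem IsPMatrix.det_submatrix_pos {m : ℕ} {B : Matrix (Fin m) (Fin m) ℝ} (hB : IsPMatrix B)
    {κ : Type*} [Fintype κ] [DecidableEq κ] [Nonempty κ] {e : κ → Fin m}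
    (he : Function.Injective e) : 0 < (B.submatrix e e).det := by
  set S := Finset.univ.map ⟨e, he⟩
  let σ : κ ≃ {y // y ∈ S} := Equiv.ofBijective (fun k => ⟨e k, by simp [S]⟩)
    ⟨fun k l hkl => he (congrArg Subtype.val hkl), fun ⟨y, hy⟩ => by
      obtain ⟨k, -, rfl⟩ := Finset.mem_map.1 hy
      exact ⟨k, rfl⟩⟩
  have h := hB S (Finset.univ_nonempty.map)
  rwa [← det_submatrix_equiv_self σ] at h

theorem IsPMatrix.transpose {m : ℕ} {B : Matrix (Fin m) (Fin m) ℝ} (hB : IsPMatrix B) :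
    IsPMatrix Bᵀ := fun S hS => by
  simpa only [← transpose_submatrix, det_transpose] using hB S hS

theorem IsPMatrix.diag_pos {m : ℕ} {B : Matrix (Fin m) (Fin m) ℝ} (hB : IsPMatrix B)
    (i : Fin m) : 0 < B i i := by
  simpa using hB.det_submatrix_pos (e := fun _ : Unit => i) (fun _ _ _ => rfl)

theorem IsPMatrix.schurComplZero {n : ℕ} {B : Matrix (Fin (n + 1)) (Fin (n + 1)) ℝ}
    (hB : IsPMatrix B) : IsPMatrix (schurComplZero B) := by
  intro S _
  have hβ := hB.diag_pos 0
  have hinj : Function.Injective (Sum.elim (fun _ : Unit => (0 : Fin (n + 1)))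
      (Fin.succ ∘ (Subtype.val : {y // y ∈ S} → Fin n))) :=
    Function.injective_of_subsingleton _ |>.sumElim
      ((Fin.succ_injective n).comp Subtype.val_injective) fun _ _ => (Fin.succ_ne_zero _).symm
  have h := hB.det_submatrix_pos hinj
  rw [det_submatrix_sumElim_eq_mul_det_schurComplZero B hβ.ne'] at h
  exact pos_of_mul_pos_right h hβ.le

theorem IsPMatrix.exists_pos_mulVec_pos {n : ℕ} {B : Matrix (Fin n) (Fin n) ℝ}
    (hZ : B.IsZMatrix) (hB : IsPMatrix B) :
    ∃ q : Fin n → ℝ, (∀ i, 0 < q i) ∧ ∀ i, 0 < (B *ᵥ q) i := by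
  induction n with
  | zero => exact ⟨0, finZeroElim, finZeroElim⟩
  | succ n ih =>
    have hβ := hB.diag_pos 0
    obtain ⟨u, hu, hSu⟩ := ih (hZ.schurComplZero hβ) hB.schurComplZero
    exact exists_pos_mulVec_pos_of_schurComplZero hβ (fun j => hZ _ _ (Fin.succ_ne_zero j).symm)
      hu hSu

theorem Matrix.IsZMatrix.isPMatrix_of_sum_add_pos {m : ℕ} {A : Matrix (Fin m) (Fin m) ℝ}
    (hA : A.IsZMatrix) (hsum : ∀ i, 0 < ∑ j, (A i j + A j i)) : IsPMatrix A := fun _ _ =>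
  det_pos_of_dotProduct_mulVec_pos fun _ hy =>
    (hA.submatrix Subtype.val_injective).dotProduct_mulVec_pos
      (hA.sum_submatrix_add_pos hsum Subtype.val_injective) hy

theorem IsPMatrix.of_diagonal_mul_mul_diagonal {m : ℕ} {B : Matrix (Fin m) (Fin m) ℝ}
    {η q : Fin m → ℝ} (hη : ∀ i, 0 < η i) (hq : ∀ i, 0 < q i)
    (hB : IsPMatrix (diagonal η * B * diagonal q)) : IsPMatrix B := by
  intro S hS
  have hdet := hB S hS
  have hsub : (diagonal η * B * diagonal q).submatrix Subtype.val Subtype.val =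
      diagonal (η ∘ Subtype.val) * B.submatrix (Subtype.val : {y // y ∈ S} → Fin m) Subtype.val
        * diagonal (q ∘ Subtype.val) := by
    ext i j
    simp [diagonal_mul, mul_diagonal]
  rw [hsub, det_mul, det_mul, det_diagonal, det_diagonal] at hdet
  have hηS : 0 < ∏ i : {y // y ∈ S}, η i := Finset.prod_pos fun i _ => hη i
  have hqS : 0 < ∏ i : {y // y ∈ S}, q i := Finset.prod_pos fun i _ => hq i
  exact pos_of_mul_pos_right (pos_of_mul_pos_left hdet hqS.le) hηS.le

theorem statement0 (n : ℕ) (B : Matrix (Fin n) (Fin n) ℝ)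
    (hoff : ∀ i j, i ≠ j → B i j ≤ 0) :
    IsNonsingularMMatrix B ↔
      ∃ η q : Fin n → ℝ, (∀ i, 0 < η i) ∧ (∀ i, 0 < q i) ∧
        ∀ i, 0 < ∑ j, (η i * B i j * q j + η j * B j i * q i) := by
  constructor
  · rintro ⟨-, hP⟩
    obtain ⟨q, hq, hBq⟩ := hP.exists_pos_mulVec_pos hoff
    obtain ⟨η, hη, hBη⟩ := hP.transpose.exists_pos_mulVec_pos fun i j hij => hoff j i hij.symm
    refine ⟨η, q, hη, hq, fun i => ?_⟩
    have hsplit : ∑ j, (η i * B i j * q j + η j * B j i * q i) =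
        η i * (B *ᵥ q) i + (Bᵀ *ᵥ η) i * q i := by
      simp only [mulVec, dotProduct, transpose_apply, Finset.sum_add_distrib, Finset.mul_sum,
        Finset.sum_mul]
      congr 1 <;> exact Finset.sum_congr rfl fun j _ => by ring
    rw [hsplit]
    exact add_pos (mul_pos (hη i) (hBq i)) (mul_pos (hBη i) (hq i))
  · rintro ⟨η, q, hη, hq, hsum⟩
    refine ⟨hoff, IsPMatrix.of_diagonal_mul_mul_diagonal hη hq
      (IsZMatrix.isPMatrix_of_sum_add_pos ?_ ?_)⟩
    · intro i j hij
      simpa [diagonal_mul, mul_diagonal] using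
        mul_nonpos_of_nonpos_of_nonneg (mul_nonpos_of_nonneg_of_nonpos (hη i).le (hoff i j hij))
          (hq j).le
    · simpa [diagonal_mul, mul_diagonal] using hsum

end
end

section
/- Let B = [b_{ij}] be an n×n real matrix with b_{ij} ≤ 0 for all i ≠ j, let r ∈ ℝ^n with r_i ≥ 0 for all i, and suppose there exists η ∈ ℝ^n with η_i > 0 for all i such that Σ_{j=1}^n (η_i b_{ij} + η_j b_{ji}) > 0 for every i = 1,…,n. Then every solution x : [0,∞) → ℝ^n of the ODE system x_i′(t) = −x_i(t)·(r_i + Σ_{j=1}^n b_{ij} x_j(t)), i = 1,…,n, with x_i(t) ≥ 0 for all t ≥ 0 and all i, satisfies x(t) → 0 as t → ∞. -/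
/-!
`V = ∑ i, η i * x i` is a Lyapunov function. Its derivative is `-∑ η i r i x i` minus the
quadratic form of `η i * B i j`; the nonpositive off-diagonal entries bound that form below by
`½ ∑ ε i x i²` with `ε i = ∑ j, (η i * B i j + η j * B j i) > 0`, and Cauchy–Schwarz turns this
into `V' ≤ -c V²`. A nonnegative solution of such an inequality tends to `0`, and each
`x i ≤ V / η i`.
-/

open MeasureTheory Filter Topology

noncomputable section

open Set Finset

lemma antitoneOn_Ici_of_hasDerivAt_nonpos {f f' : ℝ → ℝ} {a : ℝ}
    (hf : ContinuousOn f (Ici a)) (hderiv : ∀ t, a < t → HasDerivAt f (f' t) t)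
    (hf' : ∀ t, a < t → f' t ≤ 0) : AntitoneOn f (Ici a) :=
  antitoneOn_of_hasDerivWithinAt_nonpos (convex_Ici a) hf
    (fun t ht => (hderiv t (by simpa using ht)).hasDerivWithinAt)
    (fun t ht => hf' t (by simpa using ht))

/-- As long as `f ≥ δ`, it decreases at rate at least `c δ²`, so it cannot stay above `δ`
forever. -/
theorem tendsto_zero_of_hasDerivAt_le_neg_mul_sq {f f' : ℝ → ℝ} {c : ℝ} (hc : 0 < c)
    (hf : ContinuousOn f (Ici 0)) (hderiv : ∀ t, 0 < t → HasDerivAt f (f' t) t)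
    (hf' : ∀ t, 0 < t → f' t ≤ -(c * f t ^ 2)) (hnonneg : ∀ t, 0 ≤ t → 0 ≤ f t) :
    Tendsto f atTop (𝓝 0) := by
  have hanti : AntitoneOn f (Ici 0) :=
    antitoneOn_Ici_of_hasDerivAt_nonpos hf hderiv fun t ht => by
      nlinarith [hf' t ht, sq_nonneg (f t)]
  have hbelow : ∀ δ > 0, ∃ T, 0 ≤ T ∧ f T < δ := by
    intro δ hδ
    by_contra! hge
    have hδ2 : 0 < c * δ ^ 2 := by positivity
    have hanti' : AntitoneOn (fun t => f t + c * δ ^ 2 * t) (Ici 0) :=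
      antitoneOn_Ici_of_hasDerivAt_nonpos
        (hf.add (continuous_const.mul continuous_id).continuousOn)
        (fun t ht => (hderiv t ht).add ((hasDerivAt_id t).const_mul _)) fun t ht => by
          have hsq : δ ^ 2 ≤ f t ^ 2 := pow_le_pow_left₀ hδ.le (hge t ht.le) 2
          nlinarith [hf' t ht]
    set T := (f 0 + 1) / (c * δ ^ 2)
    have hT : c * δ ^ 2 * T = f 0 + 1 := mul_div_cancel₀ _ hδ2.ne'
    have hT0 : 0 ≤ T := div_nonneg (by linarith [hnonneg 0 le_rfl]) hδ2.le
    have := hanti' self_mem_Ici hT0 hT0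
    simp only [mul_zero, add_zero] at this
    linarith [hnonneg T hT0]
  refine tendsto_order.2 ⟨fun a ha => ?_, fun δ hδ => ?_⟩
  · filter_upwards [eventually_ge_atTop 0] with t ht
    exact ha.trans_le (hnonneg t ht)
  · obtain ⟨T, hT0, hT⟩ := hbelow δ hδ
    filter_upwards [eventually_ge_atTop T] with t ht
    exact (hanti hT0 (hT0.trans ht) ht).trans_lt hT

lemma Finset.sq_sum_mul_le_sum_sq_div_mul_sum {ι : Type*} (s : Finset ι) (η ε y : ι → ℝ)
    (hε : ∀ i ∈ s, 0 < ε i) :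
    (∑ i ∈ s, η i * y i) ^ 2 ≤ (∑ i ∈ s, η i ^ 2 / ε i) * ∑ i ∈ s, ε i * y i ^ 2 :=
  sum_sq_le_sum_mul_sum_of_sq_le_mul s
    (fun i hi => div_nonneg (sq_nonneg _) (hε i hi).le)
    (fun i hi => mul_nonneg (hε i hi).le (sq_nonneg _))
    (fun i hi => le_of_eq (by field_simp [(hε i hi).ne']))

section

variable {ι : Type*} [Fintype ι]

/-- Symmetrise, then use `A i j (y i - y j)² ≤ 0` off the diagonal. -/
lemma sum_sum_add_mul_sq_le (A : ι → ι → ℝ) (hA : ∀ i j, i ≠ j → A i j ≤ 0) (y : ι → ℝ) :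
    ∑ i, (∑ j, (A i j + A j i)) * y i ^ 2 ≤ 2 * ∑ i, ∑ j, A i j * y i * y j := by
  have hswap : ∑ i, ∑ j, A j i * y i ^ 2 = ∑ i, ∑ j, A i j * y j ^ 2 := sum_comm
  calc ∑ i, (∑ j, (A i j + A j i)) * y i ^ 2
      = ∑ i, ∑ j, A i j * (y i ^ 2 + y j ^ 2) := by
        simp only [sum_mul, add_mul, sum_add_distrib, mul_add, hswap]
    _ ≤ ∑ i, ∑ j, 2 * (A i j * y i * y j) := by
        refine sum_le_sum fun i _ => sum_le_sum fun j _ => ?_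
        rcases eq_or_ne i j with rfl | hij
        · exact le_of_eq (by ring)
        · nlinarith [mul_nonpos_of_nonpos_of_nonneg (hA i j hij) (sq_nonneg (y i - y j))]
    _ = 2 * ∑ i, ∑ j, A i j * y i * y j := by simp only [mul_sum]

theorem exists_pos_weighted_sum_drift_le_neg_mul_sq [Nonempty ι] (B : Matrix ι ι ℝ)
    (hoff : ∀ i j, i ≠ j → B i j ≤ 0) (r : ι → ℝ) (hr : ∀ i, 0 ≤ r i)
    (η : ι → ℝ) (hη : ∀ i, 0 < η i) (hsym : ∀ i, 0 < ∑ j, (η i * B i j + η j * B j i)) :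
    ∃ c > 0, ∀ y : ι → ℝ, (∀ i, 0 ≤ y i) →
      ∑ i, η i * (-(y i) * (r i + ∑ j, B i j * y j)) ≤ -(c * (∑ i, η i * y i) ^ 2) := by
  set ε : ι → ℝ := fun i => ∑ j, (η i * B i j + η j * B j i)
  set K := ∑ i, η i ^ 2 / ε i
  have hK : 0 < K := sum_pos (fun i _ => div_pos (pow_pos (hη i) 2) (hsym i)) univ_nonempty
  refine ⟨(2 * K)⁻¹, by positivity, fun y hy => ?_⟩
  have hquad : ∑ i, ε i * y i ^ 2 ≤ 2 * ∑ i, ∑ j, η i * B i j * y i * y j :=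
    sum_sum_add_mul_sq_le (fun i j => η i * B i j)
      (fun i j hij => mul_nonpos_of_nonneg_of_nonpos (hη i).le (hoff i j hij)) y
  have hCS : (∑ i, η i * y i) ^ 2 ≤ K * ∑ i, ε i * y i ^ 2 :=
    sq_sum_mul_le_sum_sq_div_mul_sum univ η ε y fun i _ => hsym i
  have hdrift : ∑ i, η i * (-(y i) * (r i + ∑ j, B i j * y j)) =
      -∑ i, η i * r i * y i - ∑ i, ∑ j, η i * B i j * y i * y j := by
    rw [← sum_neg_distrib, ← sum_sub_distrib]
    refine sum_congr rfl fun i _ => ?_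
    simp only [mul_add, mul_sum, sub_eq_add_neg, ← sum_neg_distrib]
    congr 1
    · ring
    · exact sum_congr rfl fun j _ => by ring
  have hlogistic : 0 ≤ ∑ i, η i * r i * y i :=
    sum_nonneg fun i _ => mul_nonneg (mul_nonneg (hη i).le (hr i)) (hy i)
  have hdecay : (2 * K)⁻¹ * (∑ i, η i * y i) ^ 2 ≤ ∑ i, ∑ j, η i * B i j * y i * y j := by
    rw [inv_mul_le_iff₀ (by positivity)]
    nlinarith
  linarith

end

theorem statement1 (n : ℕ) (B : Matrix (Fin n) (Fin n) ℝ)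
    (hoff : ∀ i j, i ≠ j → B i j ≤ 0)
    (r : Fin n → ℝ) (hr : ∀ i, 0 ≤ r i)
    (η : Fin n → ℝ) (hη : ∀ i, 0 < η i)
    (hsym : ∀ i, 0 < ∑ j, (η i * B i j + η j * B j i))
    (x : Fin n → ℝ → ℝ)
    (hxc : ∀ i, ContinuousOn (x i) (Set.Ici 0))
    (hxnn : ∀ i t, (0:ℝ) ≤ t → 0 ≤ x i t)
    (hode : ∀ i t, (0:ℝ) < t → HasDerivAt (x i)
      (-(x i t) * (r i + ∑ j, B i j * x j t)) t) :
    ∀ i, Filter.Tendsto (x i) Filter.atTop (nhds 0) := by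
  intro i₀
  have : Nonempty (Fin n) := ⟨i₀⟩
  obtain ⟨c, hc, hdrift⟩ := exists_pos_weighted_sum_drift_le_neg_mul_sq B hoff r hr η hη hsym
  have hV : Tendsto (fun t => ∑ i, η i * x i t) atTop (𝓝 0) :=
    tendsto_zero_of_hasDerivAt_le_neg_mul_sq hc
      (continuousOn_finsetSum _ fun i _ => continuousOn_const.mul (hxc i))
      (fun t ht => HasDerivAt.fun_sum fun i _ => (hode i t ht).const_mul (η i))
      (fun t ht => hdrift _ fun i => hxnn i t ht.le)
      (fun t ht => sum_nonneg fun i _ => mul_nonneg (hη i).le (hxnn i t ht))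
  have hdominated : ∀ t, 0 ≤ t → x i₀ t ≤ (∑ i, η i * x i t) / η i₀ := fun t ht => by
    rw [le_div_iff₀ (hη i₀), mul_comm]
    exact single_le_sum (f := fun i => η i * x i t)
      (fun i _ => mul_nonneg (hη i).le (hxnn i t ht)) (mem_univ i₀)
  exact squeeze_zero' (eventually_ge_atTop 0 |>.mono fun t => hxnn i₀ t)
    (eventually_ge_atTop 0 |>.mono hdominated) (by simpa using hV.div_const (η i₀))

end
end

section
/- Let K : [0,∞) → [0,∞) be integrable with ∫_0^∞ s·K(s) ds < ∞, and let x : ℝ → ℝ be a continuous function that is bounded on (−∞,0] and satisfies x ∈ L²([0,∞)). Then the function t ↦ ∫_0^∞ K(s) x(t−s)² ds, for t ≥ 0, belongs to L¹([0,∞)); indeed ∫_0^∞ (∫_0^∞ K(s) x(t−s)² ds) dt ≤ M·∫_0^∞ s·K(s) ds + (∫_0^∞ K(s) ds)·‖x‖²_{L²[0,∞)}, where M = sup_{t ≤ 0} x(t)². -/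
/-!
Shifting by `s ≥ 0` gives
`∫_{t ≥ 0} x(t - s)² dt = ∫_{-s}^0 x² + ‖x‖²_{L²[0,∞)} ≤ M s + ‖x‖²`.
Weighting by `K(s) ≥ 0` and integrating in `s` bounds the iterated integral taken in the order
`dt ds` by `M ∫ s K + ‖x‖² ∫ K`; since the integrand is nonnegative this makes it integrable
on the product (Tonelli), so Fubini yields both the integrability in `t` and the bound in the
order `ds dt`.
-/

open MeasureTheory Filter Topology

open Set

section Fubini

variable {α β : Type*} [MeasurableSpace α] [MeasurableSpace β]
  {μ : Measure α} {ν : Measure β} [SFinite μ] [SFinite ν] {f : α → β → ℝ} {g : β → ℝ}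

theorem integrable_uncurry_of_integral_le
    (hf : AEStronglyMeasurable (Function.uncurry f) (μ.prod ν))
    (hf0 : ∀ᵐ y ∂ν, ∀ x, 0 ≤ f x y) (hfi : ∀ᵐ y ∂ν, Integrable (f · y) μ)
    (hg : Integrable g ν)
    (hfg : ∀ᵐ y ∂ν, ∫ x, f x y ∂μ ≤ g y) :
    Integrable (Function.uncurry f) (μ.prod ν) := by
  refine (integrable_prod_iff' hf).2 ⟨hfi, hg.mono' hf.norm.prod_swap.integral_prod_right' ?_⟩
  filter_upwards [hf0, hfg] with y hy hyg
  have hnorm : ∫ x, ‖f x y‖ ∂μ = ∫ x, f x y ∂μ :=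
    integral_congr_ae (Eventually.of_forall fun x => Real.norm_of_nonneg (hy x))
  rw [Real.norm_of_nonneg (integral_nonneg fun x => norm_nonneg _)]
  exact hnorm ▸ hyg

theorem integral_integral_le_of_integral_le
    (hf : AEStronglyMeasurable (Function.uncurry f) (μ.prod ν))
    (hf0 : ∀ᵐ y ∂ν, ∀ x, 0 ≤ f x y) (hfi : ∀ᵐ y ∂ν, Integrable (f · y) μ)
    (hg : Integrable g ν)
    (hfg : ∀ᵐ y ∂ν, ∫ x, f x y ∂μ ≤ g y) :
    ∫ x, ∫ y, f x y ∂ν ∂μ ≤ ∫ y, g y ∂ν := by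
  rw [integral_integral_swap (integrable_uncurry_of_integral_le hf hf0 hfi hg hfg)]
  refine integral_mono_of_nonneg ?_ hg hfg
  filter_upwards [hf0] with y hy
  exact integral_nonneg hy

end Fubini

theorem integrableOn_Ici_comp_sub_right_iff {E : Type*} [NormedAddCommGroup E] {f : ℝ → E}
    (a s : ℝ) : IntegrableOn (fun t => f (t - s)) (Ici a) ↔ IntegrableOn f (Ici (a - s)) := by
  have h := (measurePreserving_sub_right volume s).integrableOn_comp_preimage
    (MeasurableEquiv.subRight s).measurableEmbedding (f := f) (s := Ici (a - s))
  rwa [preimage_sub_const_Ici, sub_add_cancel] at h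

theorem setIntegral_Ici_comp_sub_right {E : Type*} [NormedAddCommGroup E] [NormedSpace ℝ E]
    (f : ℝ → E) (a s : ℝ) : ∫ t in Ici a, f (t - s) = ∫ u in Ici (a - s), f u := by
  have h := (measurePreserving_sub_right volume s).setIntegral_preimage_emb
    (MeasurableEquiv.subRight s).measurableEmbedding f (Ici (a - s))
  rwa [preimage_sub_const_Ici, sub_add_cancel] at h

theorem MeasureTheory.LocallyIntegrable.integrableOn_Ici_of_le {E : Type*}
    [NormedAddCommGroup E] {f : ℝ → E} (hf : LocallyIntegrable f) {a b : ℝ} (hab : a ≤ b)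
    (hb : IntegrableOn f (Ici b)) :
    IntegrableOn f (Ici a) := by
  rw [← Ico_union_Ici_eq_Ici hab]
  exact ((hf.integrableOn_isCompact isCompact_Icc).mono_set Ico_subset_Icc_self).union hb

theorem setIntegral_Ici_le_of_le_on_Icc {f : ℝ → ℝ} {a b M : ℝ} (hab : a ≤ b)
    (hf : IntegrableOn f (Ici a)) (hM : ∀ u ∈ Icc a b, f u ≤ M) :
    ∫ u in Ici a, f u ≤ M * (b - a) + ∫ u in Ici b, f u := by
  have hsplit := intervalIntegral.integral_Ici_sub_Ici' hf (hf.mono_set (Ici_subset_Ici.2 hab))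
  have hfab : IntervalIntegrable f volume a b :=
    (intervalIntegrable_iff_integrableOn_Icc_of_le hab).2 (hf.mono_set Icc_subset_Ici_self)
  have hle := intervalIntegral.integral_mono_on hab hfab intervalIntegrable_const hM
  rw [intervalIntegral.integral_const, smul_eq_mul] at hle
  linarith

theorem sq_le_iSup_Iic_sq {x : ℝ → ℝ} {a C : ℝ} (hC : ∀ t ≤ a, |x t| ≤ C) {u : ℝ}
    (hu : u ≤ a) :
    x u ^ 2 ≤ ⨆ t : Iic a, x t ^ 2 := by
  refine le_ciSup (f := fun t : Iic a => x t ^ 2) ⟨C ^ 2, ?_⟩ ⟨u, hu⟩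
  rintro _ ⟨⟨t, ht⟩, rfl⟩
  exact sq_le_sq' (abs_le.1 (hC t ht)).1 (abs_le.1 (hC t ht)).2

theorem sq_comp_sub_integrableOn_Ici_and_le {x : ℝ → ℝ} (hxc : Continuous x) {C : ℝ}
    (hC : ∀ t ≤ (0:ℝ), |x t| ≤ C) (hL2 : IntegrableOn (fun t => x t ^ 2) (Ici 0)) {s : ℝ}
    (hs : 0 ≤ s) :
    IntegrableOn (fun t => x (t - s) ^ 2) (Ici 0) ∧
      ∫ t in Ici 0, x (t - s) ^ 2 ≤ (⨆ t : Iic (0:ℝ), x t ^ 2) * s + ∫ t in Ici 0, x t ^ 2 := by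
  have hsq : IntegrableOn (fun u => x u ^ 2) (Ici (0 - s)) :=
    (hxc.pow 2).locallyIntegrable.integrableOn_Ici_of_le (by linarith) hL2
  refine ⟨(integrableOn_Ici_comp_sub_right_iff 0 s).2 hsq, ?_⟩
  rw [setIntegral_Ici_comp_sub_right (fun u => x u ^ 2)]
  simpa only [sub_sub_cancel] using setIntegral_Ici_le_of_le_on_Icc (by linarith) hsq
    fun u hu => sq_le_iSup_Iic_sq hC hu.2

theorem statement9 (K : ℝ → ℝ) (hKnn : ∀ s, (0:ℝ) ≤ s → 0 ≤ K s)
    (hKint : IntegrableOn K (Set.Ioi 0))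
    (hKmom : IntegrableOn (fun s => s * K s) (Set.Ioi 0))
    (x : ℝ → ℝ) (hxc : Continuous x)
    (hxb : ∃ C, ∀ t ≤ (0:ℝ), |x t| ≤ C)
    (hL2 : IntegrableOn (fun t => x t ^ 2) (Set.Ici 0)) :
    IntegrableOn (fun t => ∫ s in Set.Ioi (0:ℝ), K s * x (t - s) ^ 2)
      (Set.Ici 0) ∧
    (∫ t in Set.Ici (0:ℝ), ∫ s in Set.Ioi (0:ℝ), K s * x (t - s) ^ 2) ≤
      (⨆ t : Set.Iic (0:ℝ), x t ^ 2) * (∫ s in Set.Ioi (0:ℝ), s * K s) +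
        (∫ s in Set.Ioi (0:ℝ), K s) * ∫ t in Set.Ici (0:ℝ), x t ^ 2 := by
  obtain ⟨C, hC⟩ := hxb
  set M := ⨆ t : Iic (0:ℝ), x t ^ 2
  set L := ∫ t in Ici (0:ℝ), x t ^ 2
  have hshift (s : ℝ) (hs : 0 ≤ s) := sq_comp_sub_integrableOn_Ici_and_le hxc hC hL2 hs
  have hpos : ∀ᵐ s ∂volume.restrict (Ioi (0:ℝ)), 0 ≤ s :=
    (ae_restrict_mem measurableSet_Ioi).mono fun s hs => le_of_lt hs
  have hmeas : AEStronglyMeasurable (Function.uncurry fun t s => K s * x (t - s) ^ 2)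
      ((volume.restrict (Ici (0:ℝ))).prod (volume.restrict (Ioi (0:ℝ)))) :=
    hKint.aestronglyMeasurable.comp_snd.mul
      ((hxc.comp (continuous_fst.sub continuous_snd)).pow 2).aestronglyMeasurable
  have hnn : ∀ᵐ s ∂volume.restrict (Ioi (0:ℝ)), ∀ t, 0 ≤ K s * x (t - s) ^ 2 :=
    hpos.mono fun s hs t => mul_nonneg (hKnn s hs) (sq_nonneg _)
  have hint : ∀ᵐ s ∂volume.restrict (Ioi (0:ℝ)),
      IntegrableOn (fun t => K s * x (t - s) ^ 2) (Ici 0) :=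
    hpos.mono fun s hs => (hshift s hs).1.const_mul (K s)
  have hg : IntegrableOn (fun s => M * (s * K s) + L * K s) (Ioi 0) :=
    (hKmom.const_mul M).add (hKint.const_mul L)
  have hle : ∀ᵐ s ∂volume.restrict (Ioi (0:ℝ)),
      ∫ t in Ici 0, K s * x (t - s) ^ 2 ≤ M * (s * K s) + L * K s :=
    hpos.mono fun s hs => by
      rw [integral_const_mul]
      exact (mul_le_mul_of_nonneg_left (hshift s hs).2 (hKnn s hs)).trans_eq (by ring)
  refine ⟨(integrable_uncurry_of_integral_le hmeas hnn hint hg hle).integral_prod_left,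
    (integral_integral_le_of_integral_le hmeas hnn hint hg hle).trans_eq ?_⟩
  rw [integral_add (hKmom.const_mul M) (hKint.const_mul L), integral_const_mul,
    integral_const_mul]
  ring
end

section
/- Let e > 0 and d > 0, let x : [0,∞) → [0,∞) be a bounded continuous function, and let u : [0,∞) → ℝ be differentiable with u′(t) = −e·u(t) + d·x(t) for all t > 0. Then 0 ≤ liminf_{t→∞} x(t) ≤ (e/d)·liminf_{t→∞} u(t) ≤ (e/d)·limsup_{t→∞} u(t) ≤ limsup_{t→∞} x(t). -/
/-!
The integrating factor `exp (e t)` turns `u' = -e u + f` into a monotonicity statement: if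
`f ≤ K` from `t₀` on, then `exp (e t) (u t - K / e)` is antitone, so `u` lies below a function
converging to `K / e`, and symmetrically for lower bounds. Applied with `f = d x` and `K` just
above `d · limsup x` (resp. just below `d · liminf x`), this squeezes `(e / d) u` asymptotically
between the liminf and the limsup of `x`.
-/

open Filter Topology Set Real

lemma antitoneOn_exp_mul_of_hasDerivAt {e t₀ : ℝ} {v v' : ℝ → ℝ}
    (hv : ∀ t ∈ Ici t₀, HasDerivAt v (v' t) t) (hv' : ∀ t ∈ Ici t₀, v' t ≤ -e * v t) :
    AntitoneOn (fun t => exp (e * t) * v t) (Ici t₀) := by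
  have hderiv : ∀ t ∈ Ici t₀,
      HasDerivAt (fun t => exp (e * t) * v t) (exp (e * t) * (v' t + e * v t)) t := by
    intro t ht
    have hexp : HasDerivAt (fun t => exp (e * t)) (exp (e * t) * e) t :=
      ((hasDerivAt_id t).const_mul e).exp.congr_deriv (by simp)
    exact (hexp.mul (hv t ht)).congr_deriv (by ring)
  refine antitoneOn_of_hasDerivWithinAt_nonpos (convex_Ici t₀)
    (fun t ht => (hderiv t ht).continuousAt.continuousWithinAt)
    (fun t ht => (hderiv t (interior_subset ht)).hasDerivWithinAt) fun t ht => ?_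
  have := hv' t (interior_subset ht)
  exact mul_nonpos_of_nonneg_of_nonpos (exp_pos _).le (by linarith)

section LinearForcing

variable {e : ℝ} {u f : ℝ → ℝ}

lemma le_of_hasDerivAt_neg_mul_add {K t₀ : ℝ} (he : e ≠ 0)
    (hu : ∀ t ∈ Ici t₀, HasDerivAt u (-e * u t + f t) t) (hf : ∀ t ∈ Ici t₀, f t ≤ K)
    {t : ℝ} (ht : t₀ ≤ t) :
    u t ≤ K / e + (u t₀ - K / e) * exp (-(e * (t - t₀))) := by
  have hanti := antitoneOn_exp_mul_of_hasDerivAt (e := e) (v := fun t => u t - K / e)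
    (fun t ht => (hu t ht).sub_const (K / e)) fun t ht => by
      have := hf t ht
      field_simp
      linarith
  have hsplit : exp (e * t₀) = exp (e * t) * exp (-(e * (t - t₀))) := by
    rw [← exp_add]; ring_nf
  have hmono : exp (e * t) * (u t - K / e) ≤
      exp (e * t) * ((u t₀ - K / e) * exp (-(e * (t - t₀)))) :=
    calc _ ≤ exp (e * t₀) * (u t₀ - K / e) := hanti self_mem_Ici ht ht
      _ = _ := by rw [hsplit]; ring
  linarith [le_of_mul_le_mul_left hmono (exp_pos (e * t))]

lemma exists_tendsto_eventuallyLE_of_hasDerivAt {K : ℝ} (he : 0 < e)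
    (hu : ∀ᶠ t in atTop, HasDerivAt u (-e * u t + f t) t) (hf : ∀ᶠ t in atTop, f t ≤ K) :
    ∃ g : ℝ → ℝ, Tendsto g atTop (𝓝 (K / e)) ∧ u ≤ᶠ[atTop] g := by
  obtain ⟨t₀, ht₀⟩ := eventually_atTop.1 (hu.and hf)
  refine ⟨fun t => K / e + (u t₀ - K / e) * exp (-(e * (t - t₀))), ?_, ?_⟩
  · have hdecay : Tendsto (fun t => exp (-(e * (t - t₀)))) atTop (𝓝 0) :=
      tendsto_exp_atBot.comp <| tendsto_neg_atTop_atBot.comp <|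
        (tendsto_atTop_add_const_right atTop (-t₀) tendsto_id).const_mul_atTop he
    simpa using tendsto_const_nhds.add (hdecay.const_mul (u t₀ - K / e))
  · filter_upwards [eventually_ge_atTop t₀] with t ht
    exact le_of_hasDerivAt_neg_mul_add he.ne' (fun s hs => (ht₀ s hs).1)
      (fun s hs => (ht₀ s hs).2) ht

lemma exists_tendsto_eventuallyGE_of_hasDerivAt {k : ℝ} (he : 0 < e)
    (hu : ∀ᶠ t in atTop, HasDerivAt u (-e * u t + f t) t) (hf : ∀ᶠ t in atTop, k ≤ f t) :
    ∃ g : ℝ → ℝ, Tendsto g atTop (𝓝 (k / e)) ∧ g ≤ᶠ[atTop] u := by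
  obtain ⟨g, hg, hug⟩ := exists_tendsto_eventuallyLE_of_hasDerivAt (u := -u) (f := -f) (K := -k) he
    (hu.mono fun t ht => ht.neg.congr_deriv (by simp only [Pi.neg_apply]; ring))
    (hf.mono fun t ht => neg_le_neg ht)
  refine ⟨fun t => -g t, by simpa [neg_div] using hg.neg, hug.mono fun t ht => ?_⟩
  simpa using neg_le_neg ht

lemma isBoundedUnder_le_of_hasDerivAt {K : ℝ} (he : 0 < e)
    (hu : ∀ᶠ t in atTop, HasDerivAt u (-e * u t + f t) t) (hf : ∀ᶠ t in atTop, f t ≤ K) :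
    IsBoundedUnder (· ≤ ·) atTop u :=
  have ⟨_, hg, hug⟩ := exists_tendsto_eventuallyLE_of_hasDerivAt he hu hf
  hg.isBoundedUnder_le.mono_le hug

lemma isBoundedUnder_ge_of_hasDerivAt {k : ℝ} (he : 0 < e)
    (hu : ∀ᶠ t in atTop, HasDerivAt u (-e * u t + f t) t) (hf : ∀ᶠ t in atTop, k ≤ f t) :
    IsBoundedUnder (· ≥ ·) atTop u :=
  have ⟨_, hg, hgu⟩ := exists_tendsto_eventuallyGE_of_hasDerivAt he hu hf
  hg.isBoundedUnder_ge.mono_ge hgu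

lemma limsup_le_of_hasDerivAt {K : ℝ} (he : 0 < e)
    (hu : ∀ᶠ t in atTop, HasDerivAt u (-e * u t + f t) t) (hf : ∀ᶠ t in atTop, f t ≤ K)
    (hbdd : IsBoundedUnder (· ≥ ·) atTop u) : limsup u atTop ≤ K / e := by
  obtain ⟨g, hg, hug⟩ := exists_tendsto_eventuallyLE_of_hasDerivAt he hu hf
  exact hg.limsup_eq ▸ limsup_le_limsup hug hbdd.isCoboundedUnder_le hg.isBoundedUnder_le

lemma le_liminf_of_hasDerivAt {k : ℝ} (he : 0 < e)
    (hu : ∀ᶠ t in atTop, HasDerivAt u (-e * u t + f t) t) (hf : ∀ᶠ t in atTop, k ≤ f t)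
    (hbdd : IsBoundedUnder (· ≤ ·) atTop u) : k / e ≤ liminf u atTop := by
  obtain ⟨g, hg, hgu⟩ := exists_tendsto_eventuallyGE_of_hasDerivAt he hu hf
  exact hg.liminf_eq ▸ liminf_le_liminf hgu hg.isBoundedUnder_ge hbdd.isCoboundedUnder_ge

end LinearForcing

theorem statement10_general (e d : ℝ) (he : 0 < e) (hd : 0 < d)
    (x u : ℝ → ℝ)
    (hxnn : ∀ t, (0:ℝ) ≤ t → 0 ≤ x t)
    (hxb : ∃ C, ∀ t, (0:ℝ) ≤ t → x t ≤ C)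
    (hode : ∀ t, (0:ℝ) < t → HasDerivAt u (-e * u t + d * x t) t) :
    0 ≤ Filter.liminf x Filter.atTop ∧
    Filter.liminf x Filter.atTop ≤ e / d * Filter.liminf u Filter.atTop ∧
    e / d * Filter.liminf u Filter.atTop ≤ e / d * Filter.limsup u Filter.atTop ∧
    e / d * Filter.limsup u Filter.atTop ≤ Filter.limsup x Filter.atTop := by
  obtain ⟨C, hC⟩ := hxb
  have hu := (eventually_gt_atTop 0).mono hode
  have hx₀ : ∀ᶠ t in atTop, 0 ≤ x t := (eventually_ge_atTop 0).mono hxnn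
  have hxC : ∀ᶠ t in atTop, x t ≤ C := (eventually_ge_atTop 0).mono hC
  have hdx {a b : ℝ} (h : a ≤ b) : d * a ≤ d * b := mul_le_mul_of_nonneg_left h hd.le
  have hu_le := isBoundedUnder_le_of_hasDerivAt he hu (hxC.mono fun _ => hdx)
  have hu_ge := isBoundedUnder_ge_of_hasDerivAt he hu (hx₀.mono fun _ => hdx)
  have hed : 0 ≤ e / d := (div_pos he hd).le
  have hscale (c : ℝ) : e / d * (d * c / e) = c := by field_simp
  refine ⟨le_liminf_of_le (isBoundedUnder_of_eventually_le hxC).isCoboundedUnder_ge hx₀, ?_,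
    mul_le_mul_of_nonneg_left (liminf_le_limsup hu_le hu_ge) hed, ?_⟩
  · refine le_of_forall_lt_imp_le_of_dense fun c hc => ?_
    have hxc := eventually_lt_of_lt_liminf hc (isBoundedUnder_of_eventually_ge hx₀)
    have := le_liminf_of_hasDerivAt he hu (hxc.mono fun _ h => hdx h.le) hu_le
    simpa only [hscale] using mul_le_mul_of_nonneg_left this hed
  · refine le_of_forall_gt_imp_ge_of_dense fun c hc => ?_
    have hxc := eventually_lt_of_limsup_lt hc (isBoundedUnder_of_eventually_le hxC)
    have := limsup_le_of_hasDerivAt he hu (hxc.mono fun _ h => hdx h.le) hu_ge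
    simpa only [hscale] using mul_le_mul_of_nonneg_left this hed

theorem statement10 (e d : ℝ) (he : 0 < e) (hd : 0 < d)
    (x u : ℝ → ℝ)
    (hxc : ContinuousOn x (Set.Ici 0))
    (hxnn : ∀ t, (0:ℝ) ≤ t → 0 ≤ x t)
    (hxb : ∃ C, ∀ t, (0:ℝ) ≤ t → x t ≤ C)
    (huc : ContinuousOn u (Set.Ici 0))
    (hode : ∀ t, (0:ℝ) < t → HasDerivAt u (-e * u t + d * x t) t) :
    0 ≤ Filter.liminf x Filter.atTop ∧
    Filter.liminf x Filter.atTop ≤ e / d * Filter.liminf u Filter.atTop ∧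
    e / d * Filter.liminf u Filter.atTop ≤ e / d * Filter.limsup u Filter.atTop ∧
    e / d * Filter.limsup u Filter.atTop ≤ Filter.limsup x Filter.atTop :=
  statement10_general e d he hd x u hxnn hxb hode
end

section
/- Assume (H0). Let p ∈ {1,…,n−1} and fix q ∈ {p+1,…,n}. Suppose there exists a vector α = (α_1,…,α_p) with α_i ≥ 0 such that: Σ_{i=1}^p α_i b_i − b_q > 0; Σ_{i=1}^p α_i (δ_{ij} λ_i + a_{ij}) − a_{qj} ≤ 0 for j = 1,…,p; and Σ_{i=1}^p α_i a_{ij} − (δ_{qj} λ_q + a_{qj}) ≤ 0 for j = p+1,…,n. If α = 0, suppose in addition μ_q − a_{qq}⁻ > 0. Then for every positive solution (x(t), u(t)) of (E) that is bounded on [0,∞), there exist constants η > 0 and C > 0 such that x_q(t) ≤ C·e^{−η t} for all t ≥ 0; in particular x_q ∈ L²([0,∞)) and x_q(t) → 0 as t → ∞. -/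
open MeasureTheory Filter Topology

noncomputable section

/-- Hypothesis (H0) on the coefficients and the kernels of system (E). -/
def H0 (n : ℕ) (μ c d e : Fin n → ℝ) (K : Fin n → Fin n → ℝ → ℝ)
    (G : Fin n → ℝ → ℝ) : Prop :=
  (∀ i, 0 < μ i) ∧ (∀ i, 0 ≤ c i) ∧ (∀ i, 0 < d i) ∧ (∀ i, 0 < e i) ∧
  (∀ i j s, (0:ℝ) ≤ s → 0 ≤ K i j s) ∧ (∀ i s, (0:ℝ) ≤ s → 0 ≤ G i s) ∧
  (∀ i j, IntegrableOn (K i j) (Set.Ioi 0)) ∧ (∀ i, IntegrableOn (G i) (Set.Ioi 0)) ∧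
  (∀ i j, ∫ s in Set.Ioi (0:ℝ), K i j s = 1) ∧ (∀ i, ∫ s in Set.Ioi (0:ℝ), G i s = 1) ∧
  (∀ i j, IntegrableOn (fun s => s * K i j s) (Set.Ioi 0)) ∧
  (∀ i, IntegrableOn (fun s => s * G i s) (Set.Ioi 0))

/-- A positive solution of the controlled Lotka–Volterra system (E): continuous
functions, nonnegative and bounded on `(-∞,0]`, positive on `[0,∞)`, satisfying
the delay differential equations for `t > 0`. -/
def IsPositiveSolution (n : ℕ) (b : Fin n → ℝ) (a : Fin n → Fin n → ℝ)
    (μ c d e : Fin n → ℝ) (K : Fin n → Fin n → ℝ → ℝ) (G : Fin n → ℝ → ℝ)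
    (x u : Fin n → ℝ → ℝ) : Prop :=
  (∀ i, Continuous (x i)) ∧ (∀ i, Continuous (u i)) ∧
  (∀ i t, t ≤ (0:ℝ) → 0 ≤ x i t) ∧ (∀ i t, t ≤ (0:ℝ) → 0 ≤ u i t) ∧
  (∀ i, ∃ C, ∀ t ≤ (0:ℝ), x i t ≤ C) ∧ (∀ i, ∃ C, ∀ t ≤ (0:ℝ), u i t ≤ C) ∧
  (∀ i t, (0:ℝ) ≤ t → 0 < x i t) ∧ (∀ i t, (0:ℝ) ≤ t → 0 < u i t) ∧
  (∀ i t, (0:ℝ) < t → HasDerivAt (x i)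
      (x i t * (b i - μ i * x i t
        - (∑ j, a i j * ∫ s in Set.Ioi (0:ℝ), K i j s * x j (t - s))
        - c i * ∫ s in Set.Ioi (0:ℝ), G i s * u i (t - s))) t) ∧
  (∀ i t, (0:ℝ) < t → HasDerivAt (u i) (-(e i) * u i t + d i * x i t) t)

/-- A saturated equilibrium of (E): `x* ≥ 0`, `u_i* = (d_i/e_i) x_i*`, and for each
`i` either `x_i* > 0` and `(M x*)_i = b_i`, or `x_i* = 0` and `(M x*)_i ≥ b_i`,
where `M = [δ_ij λ_i + a_ij]` with `λ_i = μ_i + c_i d_i / e_i`. -/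
def IsSaturatedEquilibrium (n : ℕ) (b : Fin n → ℝ) (a : Fin n → Fin n → ℝ)
    (μ c d e : Fin n → ℝ) (xs us : Fin n → ℝ) : Prop :=
  (∀ i, 0 ≤ xs i) ∧ (∀ i, us i = d i / e i * xs i) ∧
  ∀ i, (0 < xs i ∧ (μ i + c i * d i / e i) * xs i + (∑ j, a i j * xs j) = b i) ∨
       (xs i = 0 ∧ b i ≤ (μ i + c i * d i / e i) * xs i + (∑ j, a i j * xs j))

/-!
A Lyapunov argument. Each `Sᵢ = log xᵢ - ∑ⱼ aᵢⱼ Pᵢⱼ - (cᵢ/eᵢ) uᵢ - cᵢ Qᵢ`, where `Pᵢⱼ`, `Qᵢ` are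
the bounded `delayCorrection`s of the distributed delays, satisfies `Sᵢ' = bᵢ - ∑ⱼ Lᵢⱼ xⱼ` with
`Lᵢⱼ = δᵢⱼ λᵢ + aᵢⱼ`: the delays and the control drop out. By the sign conditions on `α`,
`V = ∑_{i<p} αᵢ Sᵢ - S_q` then grows at least like `γ t` with `γ = ∑ αᵢ bᵢ - b_q > 0`.
As the solution is bounded, `Sᵢ ≤ log Mᵢ + O(1)`, so
`log x_q ≤ S_q + O(1) = ∑ αᵢ Sᵢ - V + O(1) ≤ const - γ t`.
-/

section DelayCorrection

variable {K f : ℝ → ℝ} {M : ℝ}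

/-- Its derivative is `(∫ K) f t - ∫ K(s) f(t - s) ds`: subtracting it from a quantity trades a
distributed delay in its derivative for the instantaneous value of `f`, at a bounded cost. -/
def delayCorrection (K f : ℝ → ℝ) (t : ℝ) : ℝ :=
  ∫ s in Set.Ioi 0, K s * ∫ τ in (t - s)..t, f τ

lemma abs_mul_intervalIntegral_le (hf : ∀ t, |f t| ≤ M) (t s : ℝ) :
    |K s * ∫ τ in (t - s)..t, f τ| ≤ M * |s * K s| := by
  have h := intervalIntegral.norm_integral_le_of_norm_le_const
    (a := t - s) (b := t) (fun τ _ => (Real.norm_eq_abs (f τ)).trans_le (hf τ))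
  rw [Real.norm_eq_abs, sub_sub_cancel] at h
  rw [abs_mul, abs_mul]
  nlinarith [abs_nonneg (K s)]

lemma abs_delayCorrection_le (hf : ∀ t, |f t| ≤ M)
    (hsK : IntegrableOn (fun s => s * K s) (Set.Ioi 0)) (t : ℝ) :
    |delayCorrection K f t| ≤ M * ∫ s in Set.Ioi 0, |s * K s| := by
  rw [← integral_const_mul]
  exact norm_integral_le_of_norm_le (f := fun s => K s * ∫ τ in (t - s)..t, f τ)
    (hsK.abs.const_mul M) (Eventually.of_forall fun s => abs_mul_intervalIntegral_le hf t s)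

lemma hasDerivAt_delayCorrection (hf : Continuous f) (hfb : ∀ t, |f t| ≤ M)
    (hK : IntegrableOn K (Set.Ioi 0)) (hsK : IntegrableOn (fun s => s * K s) (Set.Ioi 0))
    (t₀ : ℝ) :
    HasDerivAt (delayCorrection K f)
      ((∫ s in Set.Ioi 0, K s) * f t₀ - ∫ s in Set.Ioi 0, K s * f (t₀ - s)) t₀ := by
  set Φ : ℝ → ℝ := fun t => ∫ τ in (0 : ℝ)..t, f τ
  have hΦ (t : ℝ) : HasDerivAt Φ (f t) t := (hf.integral_hasStrictDerivAt 0 t).hasDerivAt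
  have hF (t s : ℝ) : ∫ τ in (t - s)..t, f τ = Φ t - Φ (t - s) :=
    (intervalIntegral.integral_interval_sub_left (hf.intervalIntegrable _ _)
      (hf.intervalIntegrable _ _)).symm
  have hmeas {g : ℝ → ℝ} (hg : Continuous g) :
      AEStronglyMeasurable (fun s => K s * g s) (volume.restrict (Set.Ioi 0)) :=
    hK.aestronglyMeasurable.mul hg.aestronglyMeasurable
  have hΦc : Continuous Φ := continuous_iff_continuousAt.2 fun t => (hΦ t).continuousAt
  have hF_meas (t : ℝ) :
      AEStronglyMeasurable (fun s => K s * ∫ τ in (t - s)..t, f τ)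
        (volume.restrict (Set.Ioi 0)) := by
    simp only [hF]; exact hmeas (by fun_prop)
  have hF_int :
      Integrable (fun s => K s * ∫ τ in (t₀ - s)..t₀, f τ) (volume.restrict (Set.Ioi 0)) :=
    (hsK.abs.const_mul M).mono' (hF_meas t₀)
      (Eventually.of_forall fun s => abs_mul_intervalIntegral_le hfb t₀ s)
  have hF'_bound (s t : ℝ) : ‖K s * (f t - f (t - s))‖ ≤ |K s| * (2 * M) := by
    rw [Real.norm_eq_abs, abs_mul]
    gcongr
    linarith [abs_sub (f t) (f (t - s)), hfb t, hfb (t - s)]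
  have hF_deriv (s t : ℝ) :
      HasDerivAt (fun t => K s * ∫ τ in (t - s)..t, f τ) (K s * (f t - f (t - s))) t := by
    simp only [hF]
    exact ((hΦ t).sub ((hΦ (t - s)).comp_sub_const t s)).const_mul (K s)
  have hderiv := (hasDerivAt_integral_of_dominated_loc_of_deriv_le (Metric.ball_mem_nhds t₀ one_pos)
    (Eventually.of_forall hF_meas) hF_int (hmeas (by fun_prop))
    (Eventually.of_forall fun s t _ => hF'_bound s t) (hK.abs.mul_const _)
    (Eventually.of_forall fun s t _ => hF_deriv s t)).2
  have hKf : Integrable (fun s => K s * f (t₀ - s)) (volume.restrict (Set.Ioi 0)) :=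
    (hK.abs.mul_const M).mono' (hmeas (by fun_prop)) (Eventually.of_forall fun s => by
      rw [Real.norm_eq_abs, abs_mul]; exact mul_le_mul_of_nonneg_left (hfb _) (abs_nonneg _))
  simp only [mul_sub] at hderiv
  rwa [integral_sub (hK.mul_const _) hKf, integral_mul_const] at hderiv

end DelayCorrection

section ExponentialDecay

variable {f : ℝ → ℝ} {C η : ℝ}

lemma le_mul_exp_of_log_add_le {V V' : ℝ → ℝ} {γ A : ℝ} (hf : ∀ t, 0 ≤ t → 0 < f t)
    (hV : ContinuousOn V (Set.Ici 0)) (hV' : ∀ t, 0 < t → HasDerivAt V (V' t) t)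
    (hγ : ∀ t, 0 < t → γ ≤ V' t) (hfV : ∀ t, 0 ≤ t → Real.log (f t) + V t ≤ A) (t : ℝ)
    (ht : 0 ≤ t) : f t ≤ Real.exp (A - V 0) * Real.exp (-γ * t) := by
  have hgrow := (convex_Ici 0).mul_sub_le_image_sub_of_le_deriv hV
    (by rw [interior_Ici]; exact fun t ht => (hV' t ht).differentiableAt.differentiableWithinAt)
    (by rw [interior_Ici]; exact fun t ht => (hV' t ht).deriv ▸ hγ t ht)
    0 Set.self_mem_Ici t ht ht
  rw [← Real.exp_add, ← Real.exp_log (hf t ht)]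
  gcongr
  linarith [hfV t ht]

lemma integrableOn_sq_of_le_mul_exp (hη : 0 < η)
    (hf : AEStronglyMeasurable f (volume.restrict (Set.Ici 0))) (hf0 : ∀ t, 0 ≤ t → 0 ≤ f t)
    (hfC : ∀ t, 0 ≤ t → f t ≤ C * Real.exp (-η * t)) :
    IntegrableOn (fun t => f t ^ 2) (Set.Ici 0) := by
  have hdom : IntegrableOn (fun t => C ^ 2 * Real.exp (-(2 * η) * t)) (Set.Ici 0) :=
    (integrableOn_Ici_iff_integrableOn_Ioi).2
      ((exp_neg_integrableOn_Ioi 0 (by linarith)).const_mul _)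
  refine hdom.mono' (hf.pow 2) ((ae_restrict_iff' measurableSet_Ici).2
    (Eventually.of_forall fun t (ht : 0 ≤ t) => ?_))
  calc ‖f t ^ 2‖ = f t ^ 2 := by rw [Real.norm_eq_abs, abs_sq]
    _ ≤ (C * Real.exp (-η * t)) ^ 2 := pow_le_pow_left₀ (hf0 t ht) (hfC t ht) 2
    _ = C ^ 2 * Real.exp (-(2 * η) * t) := by rw [mul_pow, ← Real.exp_nat_mul]; ring_nf

lemma tendsto_zero_of_le_mul_exp (hη : 0 < η) (hf0 : ∀ t, 0 ≤ t → 0 ≤ f t)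
    (hfC : ∀ t, 0 ≤ t → f t ≤ C * Real.exp (-η * t)) : Tendsto f atTop (𝓝 0) := by
  have hexp : Tendsto (fun t => C * Real.exp (-η * t)) atTop (𝓝 0) := by
    simpa using (Real.tendsto_exp_atBot.comp
      (tendsto_neg_atTop_atBot.comp (tendsto_id.const_mul_atTop hη))).const_mul C
  exact squeeze_zero' (eventually_ge_atTop 0 |>.mono hf0) (eventually_ge_atTop 0 |>.mono hfC) hexp

end ExponentialDecay

def logPotential {n : ℕ} (a : Fin n → Fin n → ℝ) (c e : Fin n → ℝ) (K : Fin n → Fin n → ℝ → ℝ)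
    (G : Fin n → ℝ → ℝ) (x u : Fin n → ℝ → ℝ) (i : Fin n) (t : ℝ) : ℝ :=
  Real.log (x i t) - ∑ j, a i j * delayCorrection (K i j) (x j) t - c i / e i * u i t
    - c i * delayCorrection (G i) (u i) t

namespace IsPositiveSolution

variable {n : ℕ} {b : Fin n → ℝ} {a : Fin n → Fin n → ℝ} {μ c d e : Fin n → ℝ}
  {K : Fin n → Fin n → ℝ → ℝ} {G : Fin n → ℝ → ℝ} {x u : Fin n → ℝ → ℝ} {M : Fin n → ℝ}

lemma nonneg (hsol : IsPositiveSolution n b a μ c d e K G x u) (i : Fin n) (t : ℝ) :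
    0 ≤ x i t ∧ 0 ≤ u i t := by
  obtain ⟨-, -, hx0, hu0, -, -, hxpos, hupos, -⟩ := hsol
  rcases le_or_gt t 0 with ht | ht
  · exact ⟨hx0 i t ht, hu0 i t ht⟩
  · exact ⟨(hxpos i t ht.le).le, (hupos i t ht.le).le⟩

lemma exists_abs_le (hsol : IsPositiveSolution n b a μ c d e K G x u)
    (hbdd : ∀ i, ∃ C, ∀ t, (0:ℝ) ≤ t → x i t ≤ C ∧ u i t ≤ C) :
    ∃ M : Fin n → ℝ, ∀ i t, |x i t| ≤ M i ∧ |u i t| ≤ M i := by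
  have hnonneg := hsol.nonneg
  obtain ⟨-, -, -, -, hx, hu, -⟩ := hsol
  choose C₀ hC₀ using hbdd
  choose Cx hCx using hx
  choose Cu hCu using hu
  refine ⟨fun i => max (C₀ i) (max (Cx i) (Cu i)), fun i t => ?_⟩
  rw [abs_of_nonneg (hnonneg i t).1, abs_of_nonneg (hnonneg i t).2]
  rcases le_or_gt t 0 with ht | ht
  · exact ⟨(hCx i t ht).trans (by simp), (hCu i t ht).trans (by simp)⟩
  · exact ⟨(hC₀ i t ht.le).1.trans (by simp), (hC₀ i t ht.le).2.trans (by simp)⟩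

lemma hasDerivAt_logPotential (hH0 : H0 n μ c d e K G)
    (hsol : IsPositiveSolution n b a μ c d e K G x u) (hM : ∀ j t, |x j t| ≤ M j ∧ |u j t| ≤ M j)
    (i : Fin n) {t : ℝ} (ht : 0 < t) :
    HasDerivAt (logPotential a c e K G x u i)
      (b i - ∑ j, ((if i = j then μ i + c i * d i / e i else 0) + a i j) * x j t) t := by
  obtain ⟨-, -, -, he, -, -, hK, hG, hK1, hG1, hsK, hsG⟩ := hH0
  obtain ⟨hxc, huc, -, -, -, -, hxpos, -, hx', hu'⟩ := hsol
  have hlog := (hx' i t ht).log (hxpos i t ht.le).ne'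
  rw [mul_div_cancel_left₀ _ (hxpos i t ht.le).ne'] at hlog
  have hP (j : Fin n) := hasDerivAt_delayCorrection (hxc j) (fun t => (hM j t).1)
    (hK i j) (hsK i j) t
  have hQ := hasDerivAt_delayCorrection (huc i) (fun t => (hM i t).2) (hG i) (hsG i) t
  simp only [hK1, hG1, one_mul] at hP hQ
  refine (((hlog.sub (HasDerivAt.fun_sum fun j _ => (hP j).const_mul (a i j))).sub
    ((hu' i t ht).const_mul (c i / e i))).sub (hQ.const_mul (c i))).congr_deriv ?_
  have := (he i).ne'
  simp only [add_mul, ite_mul, zero_mul, Finset.sum_add_distrib, Finset.sum_ite_eq,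
    Finset.mem_univ, if_true, mul_sub, Finset.sum_sub_distrib]
  field_simp
  ring

lemma continuousOn_logPotential (hH0 : H0 n μ c d e K G)
    (hsol : IsPositiveSolution n b a μ c d e K G x u) (hM : ∀ j t, |x j t| ≤ M j ∧ |u j t| ≤ M j)
    (i : Fin n) : ContinuousOn (logPotential a c e K G x u i) (Set.Ici 0) := by
  obtain ⟨-, -, -, -, -, -, hK, hG, -, -, hsK, hsG⟩ := hH0
  obtain ⟨hxc, huc, -, -, -, -, hxpos, -⟩ := hsol
  have hP (j : Fin n) : Continuous (delayCorrection (K i j) (x j)) :=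
    continuous_iff_continuousAt.2 fun t =>
      (hasDerivAt_delayCorrection (hxc j) (fun t => (hM j t).1) (hK i j) (hsK i j) t).continuousAt
  have hQ : Continuous (delayCorrection (G i) (u i)) :=
    continuous_iff_continuousAt.2 fun t =>
      (hasDerivAt_delayCorrection (huc i) (fun t => (hM i t).2) (hG i) (hsG i) t).continuousAt
  have hlog : ContinuousOn (fun t => Real.log (x i t)) (Set.Ici 0) :=
    (hxc i).continuousOn.log fun t ht => (hxpos i t ht).ne'
  unfold logPotential
  exact ((hlog.sub (by fun_prop)).sub (by fun_prop)).sub (by fun_prop)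

lemma exists_abs_logPotential_sub_log_le (hH0 : H0 n μ c d e K G)
    (hM : ∀ j t, |x j t| ≤ M j ∧ |u j t| ≤ M j) (i : Fin n) :
    ∃ B, ∀ t, |logPotential a c e K G x u i t - Real.log (x i t)| ≤ B := by
  obtain ⟨-, -, -, -, -, -, -, -, -, -, hsK, hsG⟩ := hH0
  refine ⟨∑ j, |a i j| * (M j * ∫ s in Set.Ioi 0, |s * K i j s|) + |c i / e i| * M i
    + |c i| * (M i * ∫ s in Set.Ioi 0, |s * G i s|), fun t => ?_⟩
  have hP : |∑ j, a i j * delayCorrection (K i j) (x j) t|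
      ≤ ∑ j, |a i j| * (M j * ∫ s in Set.Ioi 0, |s * K i j s|) :=
    (Finset.abs_sum_le_sum_abs _ _).trans <| Finset.sum_le_sum fun j _ => by
      rw [abs_mul]; gcongr; exact abs_delayCorrection_le (fun t => (hM j t).1) (hsK i j) t
  have hu : |c i / e i * u i t| ≤ |c i / e i| * M i := by
    rw [abs_mul]; gcongr; exact (hM i t).2
  have hQ :
      |c i * delayCorrection (G i) (u i) t| ≤ |c i| * (M i * ∫ s in Set.Ioi 0, |s * G i s|) := by
    rw [abs_mul]; gcongr; exact abs_delayCorrection_le (fun t => (hM i t).2) (hsG i) t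
  unfold logPotential
  calc _ = |∑ j, a i j * delayCorrection (K i j) (x j) t + c i / e i * u i t
          + c i * delayCorrection (G i) (u i) t| := by rw [← abs_neg]; ring_nf
    _ ≤ _ := (abs_add_three _ _ _).trans (by gcongr)

lemma exists_le_mul_exp (hH0 : H0 n μ c d e K G)
    (hsol : IsPositiveSolution n b a μ c d e K G x u)
    (hbdd : ∀ i, ∃ C, ∀ t, (0:ℝ) ≤ t → x i t ≤ C ∧ u i t ≤ C)
    {s : Finset (Fin n)} {α : Fin n → ℝ} {q : Fin n} (hα : ∀ i ∈ s, 0 ≤ α i)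
    (hγ : 0 < ∑ i ∈ s, α i * b i - b q)
    (hL : ∀ j, ∑ i ∈ s, α i * ((if i = j then μ i + c i * d i / e i else 0) + a i j)
      - ((if q = j then μ q + c q * d q / e q else 0) + a q j) ≤ 0) :
    ∃ η > (0:ℝ), ∃ C > (0:ℝ), ∀ t, 0 ≤ t → x q t ≤ C * Real.exp (-η * t) := by
  have hxpos : ∀ i t, 0 ≤ t → 0 < x i t := hsol.2.2.2.2.2.2.1
  obtain ⟨M, hM⟩ := hsol.exists_abs_le hbdd
  choose B hB using fun i => exists_abs_logPotential_sub_log_le (a := a) hH0 hM i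
  set S := logPotential a c e K G x u
  set L : Fin n → Fin n → ℝ := fun i j => (if i = j then μ i + c i * d i / e i else 0) + a i j
  have hV' (t : ℝ) (ht : 0 < t) : HasDerivAt (fun t => ∑ i ∈ s, α i * S i t - S q t)
      ((∑ i ∈ s, α i * b i - b q) - ∑ j, (∑ i ∈ s, α i * L i j - L q j) * x j t) t := by
    refine ((HasDerivAt.fun_sum fun i _ =>
      (hasDerivAt_logPotential hH0 hsol hM i ht).const_mul (α i)).sub
      (hasDerivAt_logPotential hH0 hsol hM q ht)).congr_deriv ?_
    simp only [mul_sub, sub_mul, Finset.sum_sub_distrib, Finset.sum_mul, Finset.mul_sum, mul_assoc]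
    rw [Finset.sum_comm]
    ring
  have hVc : ContinuousOn (fun t => ∑ i ∈ s, α i * S i t - S q t) (Set.Ici 0) :=
    (continuousOn_finsetSum s fun i _ =>
      (continuousOn_logPotential hH0 hsol hM i).const_smul (α i)).sub
      (continuousOn_logPotential hH0 hsol hM q)
  have hrate (t : ℝ) (ht : 0 < t) : ∑ i ∈ s, α i * b i - b q
      ≤ (∑ i ∈ s, α i * b i - b q) - ∑ j, (∑ i ∈ s, α i * L i j - L q j) * x j t := by
    have := Finset.sum_nonpos fun j (_ : j ∈ Finset.univ) =>
      mul_nonpos_of_nonpos_of_nonneg (hL j) (hsol.nonneg j t).1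
    linarith
  have hbound (t : ℝ) (ht : 0 ≤ t) : Real.log (x q t) + (∑ i ∈ s, α i * S i t - S q t)
      ≤ ∑ i ∈ s, α i * (Real.log (M i) + B i) + B q := by
    have hSi : ∑ i ∈ s, α i * S i t ≤ ∑ i ∈ s, α i * (Real.log (M i) + B i) :=
      Finset.sum_le_sum fun i hi => mul_le_mul_of_nonneg_left (by
        have := Real.log_le_log (hxpos i t ht) ((le_abs_self _).trans (hM i t).1)
        linarith [(abs_le.1 (hB i t)).2]) (hα i hi)
    linarith [(abs_le.1 (hB q t)).1]
  exact ⟨_, hγ, _, Real.exp_pos _, le_mul_exp_of_log_add_le (hxpos q) hVc hV'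
    hrate hbound⟩

end IsPositiveSolution

theorem statement12_general (n p : ℕ)
    (b : Fin n → ℝ) (a : Fin n → Fin n → ℝ)
    (μ c d e : Fin n → ℝ) (K : Fin n → Fin n → ℝ → ℝ) (G : Fin n → ℝ → ℝ)
    (hH0 : H0 n μ c d e K G)
    (q : Fin n) (hq : p ≤ (q : ℕ))
    (α : Fin n → ℝ)
    (hαnn : ∀ i : Fin n, (i : ℕ) < p → 0 ≤ α i)
    (h1 : 0 < (∑ i ∈ Finset.univ.filter (fun i : Fin n => (i : ℕ) < p),
        α i * b i) - b q)
    (h2 : ∀ j : Fin n, (j : ℕ) < p →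
      (∑ i ∈ Finset.univ.filter (fun i : Fin n => (i : ℕ) < p),
        α i * ((if i = j then μ i + c i * d i / e i else 0) + a i j)) - a q j ≤ 0)
    (h3 : ∀ j : Fin n, p ≤ (j : ℕ) →
      (∑ i ∈ Finset.univ.filter (fun i : Fin n => (i : ℕ) < p),
        α i * a i j) - ((if q = j then μ q + c q * d q / e q else 0) + a q j) ≤ 0) :
    ∀ x u : Fin n → ℝ → ℝ, IsPositiveSolution n b a μ c d e K G x u →
      (∀ i, ∃ C, ∀ t, (0:ℝ) ≤ t → x i t ≤ C ∧ u i t ≤ C) →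
      (∃ η > (0:ℝ), ∃ C > (0:ℝ), ∀ t, (0:ℝ) ≤ t →
          x q t ≤ C * Real.exp (-η * t)) ∧
      MeasureTheory.IntegrableOn (fun t => (x q t) ^ 2) (Set.Ici 0) ∧
      Filter.Tendsto (x q) Filter.atTop (nhds 0) := by
  intro x u hsol hbdd
  have hL (j : Fin n) : ∑ i ∈ Finset.univ.filter (fun i : Fin n => (i : ℕ) < p),
      α i * ((if i = j then μ i + c i * d i / e i else 0) + a i j)
      - ((if q = j then μ q + c q * d q / e q else 0) + a q j) ≤ 0 := by
    rcases lt_or_ge (j : ℕ) p with hj | hj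
    · simpa [show q ≠ j by rintro rfl; omega] using h2 j hj
    · convert h3 j hj using 3 with i hi
      have : i ≠ j := by rintro rfl; simp at hi; omega
      simp [this]
  obtain ⟨η, hη, C, hC, hdecay⟩ := hsol.exists_le_mul_exp hH0 hbdd
    (fun i hi => hαnn i (Finset.mem_filter.1 hi).2) h1 hL
  have hx0 (t : ℝ) (_ : 0 ≤ t) := (hsol.nonneg q t).1
  exact ⟨⟨η, hη, C, hC, hdecay⟩,
    integrableOn_sq_of_le_mul_exp hη (hsol.1 q).aestronglyMeasurable.restrict hx0 hdecay,
    tendsto_zero_of_le_mul_exp hη hx0 hdecay⟩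

theorem statement12 (n p : ℕ) (hp1 : 1 ≤ p) (hpn : p < n)
    (b : Fin n → ℝ) (a : Fin n → Fin n → ℝ)
    (μ c d e : Fin n → ℝ) (K : Fin n → Fin n → ℝ → ℝ) (G : Fin n → ℝ → ℝ)
    (hH0 : H0 n μ c d e K G)
    (q : Fin n) (hq : p ≤ (q : ℕ))
    (α : Fin n → ℝ)
    (hαnn : ∀ i : Fin n, (i : ℕ) < p → 0 ≤ α i)
    (h1 : 0 < (∑ i ∈ Finset.univ.filter (fun i : Fin n => (i : ℕ) < p),
        α i * b i) - b q)
    (h2 : ∀ j : Fin n, (j : ℕ) < p →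
      (∑ i ∈ Finset.univ.filter (fun i : Fin n => (i : ℕ) < p),
        α i * ((if i = j then μ i + c i * d i / e i else 0) + a i j)) - a q j ≤ 0)
    (h3 : ∀ j : Fin n, p ≤ (j : ℕ) →
      (∑ i ∈ Finset.univ.filter (fun i : Fin n => (i : ℕ) < p),
        α i * a i j) - ((if q = j then μ q + c q * d q / e q else 0) + a q j) ≤ 0)
    (h0 : (∀ i : Fin n, (i : ℕ) < p → α i = 0) → 0 < μ q - max 0 (-(a q q))) :
    ∀ x u : Fin n → ℝ → ℝ, IsPositiveSolution n b a μ c d e K G x u →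
      (∀ i, ∃ C, ∀ t, (0:ℝ) ≤ t → x i t ≤ C ∧ u i t ≤ C) →
      (∃ η > (0:ℝ), ∃ C > (0:ℝ), ∀ t, (0:ℝ) ≤ t →
          x q t ≤ C * Real.exp (-η * t)) ∧
      MeasureTheory.IntegrableOn (fun t => (x q t) ^ 2) (Set.Ici 0) ∧
      Filter.Tendsto (x q) Filter.atTop (nhds 0) :=
  statement12_general n p b a μ c d e K G hH0 q hq α hαnn h1 h2 h3
end
end

section
/- Let M be an n×n real P-matrix and b ∈ ℝ^n. Then there exists a unique vector x* ∈ ℝ^n with x* ≥ 0 such that for each i = 1,…,n, either x_i* > 0 and (M x*)_i = b_i, or x_i* = 0 and (M x*)_i ≥ b_i. Consequently, when M = [δ_{ij} λ_i + a_{ij}] is the controlled community matrix (with λ_i = μ_i + c_i d_i/e_i) and u_i* = (d_i/e_i) x_i*, the point (x*, u*) is the unique saturated equilibrium of the controlled Lotka–Volterra system. -/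
open MeasureTheory Filter Topology

noncomputable section

/-!
If `x_i (M x - q)_i ≤ 0` for all `i`, then `‖x‖ ≤ C ‖q‖`: the function
`x ↦ ∑ max (x_i (M x)_i) 0` is homogeneous of degree 2 and positive on the unit sphere, because a
P-matrix reverses the sign of no nonzero vector (on the support `S` of such an `x`,
`(M_SS + D) x_S = 0` for a nonnegative diagonal `D`, while `det (M_SS + D)` is a nonnegative
combination of principal minors of `M_SS`, one of which is `det M_SS > 0`). The difference of two
solutions satisfies this sign condition for the difference of the right-hand sides, so the
solution map is Lipschitz; in particular solutions are unique.

Existence is by induction on `n`: freezing the last coordinate at `t ≥ 0` and solving for the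
leading block gives a continuous curve `X t`. Either its last residual `(M X t)_n - q_n` is
nonnegative at `t = 0`, or it vanishes at some `t > 0` by the intermediate value theorem, since it
cannot stay negative: `X t` would then satisfy the sign condition, contradicting `‖X t‖ ≥ t`.
-/

open Matrix

variable {ι : Type*}

theorem Matrix.det_add_diagonal [Fintype ι] [DecidableEq ι] {R : Type*} [CommRing R]
    (A : Matrix ι ι R) (d : ι → R) :
    (A + diagonal d).det =
      ∑ t : Finset ι, (∏ i ∈ tᶜ, d i) * (A.submatrix ((↑) : t → ι) (↑)).det := by
  have hrows (t : Finset ι) : t.piecewise A.row (diagonal d).row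
      = fun i => (if i ∈ t then 1 else d i) • t.piecewise A.row (row 1) i := by
    ext i j
    by_cases hi : i ∈ t
    · simp [Finset.piecewise, hi, row]
    · simp [Finset.piecewise, hi, row, diagonal_apply, one_apply]
  have hprod (t : Finset ι) : ∏ i, (if i ∈ t then 1 else d i) = ∏ i ∈ tᶜ, d i := by
    rw [← Finset.prod_compl_mul_prod t, Finset.prod_ite_of_true (fun i hi => hi),
      Finset.prod_const_one, mul_one,
      Finset.prod_ite_of_false (fun i hi => Finset.mem_compl.mp hi)]
  change detRowAlternating (A.row + (diagonal d).row) = _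
  rw [detRowAlternating.map_add_univ]
  refine Finset.sum_congr rfl fun t _ => ?_
  rw [hrows, detRowAlternating.map_smul_univ, hprod]
  exact congrArg _ (det_piecewise_one_eq_submatrix_det A t)

def HasPosPrincipalMinors [DecidableEq ι] (M : Matrix ι ι ℝ) : Prop :=
  ∀ s : Finset ι, 0 < (M.submatrix ((↑) : s → ι) (↑)).det

theorem IsPMatrix.hasPosPrincipalMinors {m : ℕ} {M : Matrix (Fin m) (Fin m) ℝ}
    (hM : IsPMatrix M) : HasPosPrincipalMinors M := by
  intro s
  rcases s.eq_empty_or_nonempty with rfl | hs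
  · simp
  · exact hM s hs

theorem HasPosPrincipalMinors.submatrix [DecidableEq ι] {M : Matrix ι ι ℝ}
    (hM : HasPosPrincipalMinors M) {κ : Type*} [DecidableEq κ] (f : κ ↪ ι) :
    HasPosPrincipalMinors (M.submatrix f f) := by
  intro t
  have : (M.submatrix f f).submatrix ((↑) : t → κ) (↑) =
      (M.submatrix ((↑) : t.map f → ι) (↑)).submatrix (t.equivMap f) (t.equivMap f) := by
    ext i j; rfl
  rw [this, det_submatrix_equiv_self]
  exact hM _

def IsLCPSolution [Fintype ι] (M : Matrix ι ι ℝ) (q x : ι → ℝ) : Prop :=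
  (∀ i, 0 ≤ x i) ∧ ∀ i, (0 < x i ∧ (M *ᵥ x) i = q i) ∨ (x i = 0 ∧ q i ≤ (M *ᵥ x) i)

namespace IsLCPSolution

variable [Fintype ι] {M : Matrix ι ι ℝ} {q q' x y : ι → ℝ}

theorem sub_mul_sub_nonpos (hx : IsLCPSolution M q x) (hy : IsLCPSolution M q' y) (i : ι) :
    (x - y) i * ((M *ᵥ (x - y)) i - (q - q') i) ≤ 0 := by
  rw [mulVec_sub]
  simp only [Pi.sub_apply]
  rcases hx.2 i with ⟨hx0, hxq⟩ | ⟨hx0, hxq⟩ <;> rcases hy.2 i with ⟨hy0, hyq⟩ | ⟨hy0, hyq⟩ <;>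
    nlinarith [hx.1 i, hy.1 i]

theorem mul_sub_nonpos_of_le (hx : IsLCPSolution M q x) (hq : q ≤ q') (i : ι) :
    x i * ((M *ᵥ x) i - q' i) ≤ 0 := by
  rcases hx.2 i with ⟨hx0, hxq⟩ | ⟨hx0, hxq⟩ <;> nlinarith [hq i]

end IsLCPSolution

namespace HasPosPrincipalMinors

variable [Fintype ι] [DecidableEq ι] {M : Matrix ι ι ℝ}

theorem det_add_diagonal_pos (hM : HasPosPrincipalMinors M) {d : ι → ℝ} (hd : 0 ≤ d) :
    0 < (M + diagonal d).det := by
  rw [det_add_diagonal]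
  refine lt_of_lt_of_le ?_ (Finset.single_le_sum
    (fun t _ => mul_nonneg (Finset.prod_nonneg fun i _ => hd i) (hM t).le) (Finset.mem_univ .univ))
  simpa using hM .univ

theorem eq_zero_of_mul_mulVec_nonpos (hM : HasPosPrincipalMinors M) {x : ι → ℝ}
    (hx : ∀ i, x i * (M *ᵥ x) i ≤ 0) : x = 0 := by
  set s := Finset.univ.filter (x · ≠ 0)
  let y : s → ℝ := fun i => x i
  let d : s → ℝ := fun i => -(x i * (M *ᵥ x) i) / x i ^ 2
  have hd : 0 ≤ d := fun i => div_nonneg (neg_nonneg.mpr (hx i)) (sq_nonneg _)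
  have hMy : M.submatrix Subtype.val Subtype.val *ᵥ y = fun i : s => (M *ᵥ x) i := by
    ext i
    simp only [mulVec, dotProduct, submatrix_apply, y]
    rw [Finset.sum_coe_sort s (fun j => M i j * x j), Finset.sum_filter_of_ne]
    intro j _ hj
    exact right_ne_zero_of_mul hj
  have hy : (M.submatrix Subtype.val Subtype.val + diagonal d) *ᵥ y = 0 := by
    ext i
    have hi : x i ≠ 0 := (Finset.mem_filter.mp i.2).2
    rw [add_mulVec, hMy, Pi.add_apply, mulVec_diagonal]
    simp only [Pi.zero_apply, d, y]
    field_simp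
    ring
  have := eq_zero_of_mulVec_eq_zero
    ((hM.submatrix (Function.Embedding.subtype (· ∈ s))).det_add_diagonal_pos hd).ne' hy
  ext i
  by_contra hi
  exact hi (congrFun this ⟨i, Finset.mem_filter.mpr ⟨Finset.mem_univ _, hi⟩⟩)

theorem exists_pos_mul_sq_norm_le (hM : HasPosPrincipalMinors M) :
    ∃ c > 0, ∀ x : ι → ℝ, c * ‖x‖ ^ 2 ≤ ∑ i, max (x i * (M *ᵥ x) i) 0 := by
  set φ : (ι → ℝ) → ℝ := fun x => ∑ i, max (x i * (M *ᵥ x) i) 0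
  have hφ_cont : Continuous φ := by
    have : Continuous (M *ᵥ ·) := continuous_const.matrix_mulVec continuous_id
    fun_prop
  have hφ_pos : ∀ y ∈ Metric.sphere (0 : ι → ℝ) 1, 0 < φ y := by
    intro y hy
    by_contra! hφy
    have hy0 : y = 0 := hM.eq_zero_of_mul_mulVec_nonpos fun i =>
      (le_max_left _ _).trans <| (Finset.single_le_sum (f := fun j => max (y j * (M *ᵥ y) j) 0)
        (fun j _ => le_max_right _ _) (Finset.mem_univ i)).trans hφy
    simp [hy0] at hy
  have hφ_smul (r : ℝ) (x : ι → ℝ) : φ (r • x) = r ^ 2 * φ x := by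
    simp only [φ, Finset.mul_sum, mulVec_smul, Pi.smul_apply, smul_eq_mul]
    refine Finset.sum_congr rfl fun i _ => ?_
    rw [mul_max_of_nonneg _ _ (sq_nonneg r), mul_zero]
    ring_nf
  obtain ⟨c, hc, hcφ⟩ := (isCompact_sphere 0 1).exists_forall_le' hφ_cont.continuousOn hφ_pos
  refine ⟨c, hc, fun x => ?_⟩
  rcases eq_or_ne x 0 with rfl | hx
  · simp
  have hx' : 0 < ‖x‖ := norm_pos_iff.mpr hx
  calc c * ‖x‖ ^ 2 ≤ φ (‖x‖⁻¹ • x) * ‖x‖ ^ 2 := by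
        gcongr
        exact hcφ _ (by simp [norm_smul, hx'.ne'])
    _ = φ x := by rw [hφ_smul]; field_simp

theorem exists_norm_le_mul_norm (hM : HasPosPrincipalMinors M) : ∃ C, ∀ x q : ι → ℝ,
    (∀ i, x i * ((M *ᵥ x) i - q i) ≤ 0) → ‖x‖ ≤ C * ‖q‖ := by
  obtain ⟨c, hc, hcx⟩ := hM.exists_pos_mul_sq_norm_le
  refine ⟨Fintype.card ι / c, fun x q hxq => ?_⟩
  have hterm (i : ι) : x i * (M *ᵥ x) i ≤ ‖x‖ * ‖q‖ := by
    calc x i * (M *ᵥ x) i ≤ x i * q i := by linarith [hxq i]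
      _ ≤ ‖x i‖ * ‖q i‖ := by rw [← norm_mul]; exact Real.le_norm_self _
      _ ≤ ‖x‖ * ‖q‖ := by gcongr <;> exact norm_le_pi_norm _ i
  have key : c * ‖x‖ ^ 2 ≤ Fintype.card ι * (‖x‖ * ‖q‖) := by
    calc c * ‖x‖ ^ 2 ≤ ∑ i, max (x i * (M *ᵥ x) i) 0 := hcx x
      _ ≤ ∑ _i : ι, ‖x‖ * ‖q‖ := Finset.sum_le_sum fun i _ => max_le (hterm i) (by positivity)
      _ = Fintype.card ι * (‖x‖ * ‖q‖) := by simp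
  rw [div_mul_eq_mul_div, le_div_iff₀ hc]
  rcases (norm_nonneg x).eq_or_lt with hx | hx
  · rw [← hx, zero_mul]; positivity
  · nlinarith

theorem exists_norm_sub_le (hM : HasPosPrincipalMinors M) : ∃ C, ∀ {q q' x y : ι → ℝ},
    IsLCPSolution M q x → IsLCPSolution M q' y → ‖x - y‖ ≤ C * ‖q - q'‖ := by
  obtain ⟨C, hC⟩ := hM.exists_norm_le_mul_norm
  exact ⟨C, fun hx hy => hC _ _ (hx.sub_mul_sub_nonpos hy)⟩

theorem isLCPSolution_unique (hM : HasPosPrincipalMinors M) {q x y : ι → ℝ}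
    (hx : IsLCPSolution M q x) (hy : IsLCPSolution M q y) : x = y := by
  obtain ⟨C, hC⟩ := hM.exists_norm_sub_le
  simpa [sub_eq_zero] using hC hx hy

end HasPosPrincipalMinors

theorem Matrix.mulVec_snoc_castSucc {R : Type*} [NonUnitalNonAssocSemiring R] {n : ℕ}
    (M : Matrix (Fin (n + 1)) (Fin (n + 1)) R) (x : Fin n → R) (t : R) (i : Fin n) :
    (M *ᵥ Fin.snoc x t) i.castSucc =
      (M.submatrix Fin.castSucc Fin.castSucc *ᵥ x) i + M i.castSucc (Fin.last n) * t := by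
  simp [mulVec, dotProduct, Fin.sum_univ_castSucc]

theorem isLCPSolution_snoc {n : ℕ} {M : Matrix (Fin (n + 1)) (Fin (n + 1)) ℝ} {q x : Fin n → ℝ}
    {β t : ℝ}
    (hx : IsLCPSolution (M.submatrix Fin.castSucc Fin.castSucc)
      (fun i => q i - M i.castSucc (Fin.last n) * t) x)
    (ht : (0 < t ∧ (M *ᵥ Fin.snoc x t) (Fin.last n) = β) ∨
      (t = 0 ∧ β ≤ (M *ᵥ Fin.snoc x t) (Fin.last n))) :
    IsLCPSolution M (Fin.snoc q β) (Fin.snoc x t) := by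
  refine ⟨Fin.lastCases ?_ fun i => ?_, Fin.lastCases ?_ fun i => ?_⟩
  · rcases ht with ⟨ht, -⟩ | ⟨rfl, -⟩
    · simpa using ht.le
    · simp
  · simpa using hx.1 i
  · simpa using ht
  · rw [Fin.snoc_castSucc, Fin.snoc_castSucc, mulVec_snoc_castSucc]
    rcases hx.2 i with ⟨hxi, hxq⟩ | ⟨hxi, hxq⟩
    · exact Or.inl ⟨hxi, by linarith⟩
    · exact Or.inr ⟨hxi, by linarith⟩

theorem HasPosPrincipalMinors.exists_isLCPSolution_snoc {n : ℕ}
    {M : Matrix (Fin (n + 1)) (Fin (n + 1)) ℝ} (hM : HasPosPrincipalMinors M)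
    (ih : ∀ q, ∃ x, IsLCPSolution (M.submatrix Fin.castSucc Fin.castSucc) q x)
    (q : Fin n → ℝ) (β : ℝ) : ∃ x, IsLCPSolution M (Fin.snoc q β) x := by
  choose sol hsol using ih
  obtain ⟨C', hC'⟩ := (hM.submatrix Fin.castSuccEmb).exists_norm_sub_le
  have hsol_cont : Continuous sol := (LipschitzWith.of_dist_le' fun q q' => by
    simpa only [dist_eq_norm] using hC' (hsol q) (hsol q')).continuous
  set X : ℝ → Fin (n + 1) → ℝ :=
    fun t => Fin.snoc (sol fun i => q i - M i.castSucc (Fin.last n) * t) t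
  set g : ℝ → ℝ := fun t => (M *ᵥ X t) (Fin.last n)
  have hg_cont : Continuous g := by
    have : Continuous X := by fun_prop
    exact (continuous_apply _).comp (continuous_const.matrix_mulVec this)
  have hX_pos {t : ℝ} (ht : 0 < t) : IsLCPSolution M (Fin.snoc q (g t)) (X t) :=
    isLCPSolution_snoc (hsol _) (Or.inl ⟨ht, rfl⟩)
  -- Otherwise `X T` satisfies the sign condition for the right-hand side, so `T ≤ ‖X T‖ ≤ C ‖q‖`.
  have hT : ∃ T > 0, β ≤ g T := by
    obtain ⟨C, hC⟩ := hM.exists_norm_le_mul_norm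
    by_contra! h
    set T := max (C * ‖(Fin.snoc q β : Fin (n + 1) → ℝ)‖) 0 + 1
    have hT : 0 < T := by positivity
    have hle : Fin.snoc q (g T) ≤ (Fin.snoc q β : Fin (n + 1) → ℝ) :=
      fun i => Fin.lastCases (by simpa using (h T hT).le) (fun i => by simp) i
    have hXT := hC _ _ ((hX_pos hT).mul_sub_nonpos_of_le hle)
    have hTX : T ≤ ‖X T‖ := by
      simpa [X, abs_of_pos hT] using norm_le_pi_norm (X T) (Fin.last n)
    linarith [le_max_left (C * ‖(Fin.snoc q β : Fin (n + 1) → ℝ)‖) 0]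
  by_cases h0 : β ≤ g 0
  · exact ⟨X 0, isLCPSolution_snoc (hsol _) (Or.inr ⟨rfl, h0⟩)⟩
  obtain ⟨T, hT, hgT⟩ := hT
  obtain ⟨t, ht, hgt⟩ :=
    intermediate_value_Icc hT.le hg_cont.continuousOn ⟨(not_le.mp h0).le, hgT⟩
  have ht0 : 0 < t := ht.1.lt_of_ne (by rintro rfl; exact h0 hgt.ge)
  exact ⟨X t, isLCPSolution_snoc (hsol _) (Or.inl ⟨ht0, hgt⟩)⟩

theorem HasPosPrincipalMinors.exists_isLCPSolution :
    ∀ {n : ℕ} {M : Matrix (Fin n) (Fin n) ℝ}, HasPosPrincipalMinors M →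
      ∀ q, ∃ x, IsLCPSolution M q x
  | 0, _, _, _ => ⟨0, finZeroElim, finZeroElim⟩
  | _ + 1, _, hM, q => by
    rw [← Fin.snoc_init_self q]
    exact hM.exists_isLCPSolution_snoc
      (exists_isLCPSolution (hM.submatrix Fin.castSuccEmb)) _ _

theorem statement19_general (n : ℕ) (M : Matrix (Fin n) (Fin n) ℝ)
    (hM : IsPMatrix M) (b : Fin n → ℝ)
    (d e : Fin n → ℝ) :
    (∃! xs : Fin n → ℝ, (∀ i, 0 ≤ xs i) ∧
      ∀ i, (0 < xs i ∧ M.mulVec xs i = b i) ∨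
           (xs i = 0 ∧ b i ≤ M.mulVec xs i)) ∧
    (∃! z : (Fin n → ℝ) × (Fin n → ℝ),
      (∀ i, 0 ≤ z.1 i) ∧ (∀ i, z.2 i = d i / e i * z.1 i) ∧
      ∀ i, (0 < z.1 i ∧ M.mulVec z.1 i = b i) ∨
           (z.1 i = 0 ∧ b i ≤ M.mulVec z.1 i)) := by
  have hM' := hM.hasPosPrincipalMinors
  obtain ⟨x, hx⟩ := hM'.exists_isLCPSolution b
  refine ⟨⟨x, hx, fun y hy => hM'.isLCPSolution_unique hy hx⟩,
    ⟨(x, fun i => d i / e i * x i), ⟨hx.1, fun _ => rfl, hx.2⟩, ?_⟩⟩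
  rintro ⟨y, u⟩ ⟨hy, hu, hyc⟩
  obtain rfl := hM'.isLCPSolution_unique ⟨hy, hyc⟩ hx
  exact Prod.ext rfl (funext hu)

theorem statement19 (n : ℕ) (M : Matrix (Fin n) (Fin n) ℝ)
    (hM : IsPMatrix M) (b : Fin n → ℝ)
    (d e : Fin n → ℝ) (hd : ∀ i, 0 < d i) (he : ∀ i, 0 < e i) :
    (∃! xs : Fin n → ℝ, (∀ i, 0 ≤ xs i) ∧
      ∀ i, (0 < xs i ∧ M.mulVec xs i = b i) ∨
           (xs i = 0 ∧ b i ≤ M.mulVec xs i)) ∧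
    (∃! z : (Fin n → ℝ) × (Fin n → ℝ),
      (∀ i, 0 ≤ z.1 i) ∧ (∀ i, z.2 i = d i / e i * z.1 i) ∧
      ∀ i, (0 < z.1 i ∧ M.mulVec z.1 i = b i) ∨
           (z.1 i = 0 ∧ b i ≤ M.mulVec z.1 i)) :=
  statement19_general n M hM b d e

end
end
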